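/- arXiv:1509.08581 — 14 statements merged into one kernel-verified Lean document; each statement's English description precedes it below -/
import Mathlib

section
/- Let X be a closed symmetric set in ℝ^n (i.e., closed under coordinate permutations). If y is a point of X minimizing the Euclidean distance to x (i.e., y is a projection of x onto X), then (y_i - y_j)(x_i - x_j) ≥ 0 for all indices i, j. -/
open scoped RealInnerProductSpace

noncomputable section

/-- Euclidean space ℝ^n. -/
abbrev E (n : ℕ) := EuclideanSpace ℝ (Fin n)

/-- Support of a vector, as a finset. -/
def spt {n : ℕ} (x : E n) : Finset (Fin n) := Finset.univ.filter (fun i => x i ≠ 0)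

/-- A set is symmetric if it is invariant under coordinate permutations. -/
def IsSymmSet {n : ℕ} (X : Set (E n)) : Prop :=
  ∀ x ∈ X, ∀ σ : Equiv.Perm (Fin n), (WithLp.toLp 2 (fun i => x (σ i)) : E n) ∈ X

/-- A set is sign-free symmetric if it is symmetric and invariant under sign flips. -/
def IsSignFreeSymmSet {n : ℕ} (X : Set (E n)) : Prop :=
  IsSymmSet X ∧ ∀ x ∈ X, ∀ ε : Fin n → ℝ, (∀ i, ε i = 1 ∨ ε i = -1) →
    (WithLp.toLp 2 (fun i => ε i * x i) : E n) ∈ X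

/-- A set is nonnegative symmetric if it is symmetric and contained in ℝ^n_+. -/
def IsNonnegSymmSet {n : ℕ} (X : Set (E n)) : Prop :=
  IsSymmSet X ∧ ∀ x ∈ X, ∀ i, 0 ≤ x i

/-- `y` is a (Euclidean) projection of `x` onto `X`. -/
def IsProj {n : ℕ} (X : Set (E n)) (x y : E n) : Prop :=
  y ∈ X ∧ ∀ z ∈ X, ‖y - x‖ ≤ ‖z - x‖

/-- The set of s-sparse vectors. -/
def Cs (n s : ℕ) : Set (E n) := {x | (spt x).card ≤ s}

theorem stmt0 {n : ℕ} (X : Set (E n)) (hX : IsClosed X) (hsym : IsSymmSet X)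
    (x y : E n) (hy : IsProj X x y) :
    ∀ i j : Fin n, (y i - y j) * (x i - x j) ≥ 0 := by
  intro i j
  by_cases hij : i = j
  · subst hij; simp
  set σ := Equiv.swap i j with hσ
  set z : E n := WithLp.toLp 2 (fun k => y (σ k)) with hz
  have hzX : z ∈ X := hsym y hy.1 σ
  have hle : ‖y - x‖ ≤ ‖z - x‖ := hy.2 z hzX
  have hsq : ‖y - x‖ ^ 2 ≤ ‖z - x‖ ^ 2 :=
    pow_le_pow_left₀ (norm_nonneg _) hle 2
  have hnorm : ∀ v : E n, ‖v‖ ^ 2 = ∑ k, (v k) ^ 2 := by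
    intro v
    rw [EuclideanSpace.norm_eq, Real.sq_sqrt (by positivity)]
    simp [Real.norm_eq_abs, sq_abs]
  have hsum : ∑ k, ((z k - x k) ^ 2) - ∑ k, ((y k - x k) ^ 2)
      = 2 * ((y i - y j) * (x i - x j)) := by
    rw [← Finset.sum_sub_distrib]
    rw [Finset.sum_eq_add_of_mem i j (Finset.mem_univ i) (Finset.mem_univ j) hij
      (by
        intro k _ hk
        have h1 : σ k = k := by
          rw [hσ, Equiv.swap_apply_of_ne_of_ne hk.1 hk.2]
        show (y (σ k) - x k) ^ 2 - (y k - x k) ^ 2 = 0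
        rw [h1]; ring)]
    have e1 : z i = y j := by show y (σ i) = y j; rw [hσ, Equiv.swap_apply_left]
    have e2 : z j = y i := by show y (σ j) = y i; rw [hσ, Equiv.swap_apply_right]
    rw [e1, e2]; ring
  have h1 : ‖z - x‖ ^ 2 = ∑ k, ((z k - x k) ^ 2) := by
    rw [hnorm]; exact Finset.sum_congr rfl fun k _ => by simp
  have h2 : ‖y - x‖ ^ 2 = ∑ k, ((y k - x k) ^ 2) := by
    rw [hnorm]; exact Finset.sum_congr rfl fun k _ => by simp
  nlinarith [hsq]
end
end

section
/- Let Ω ⊆ ℝ^n be a closed sign-free symmetric convex set, x ∈ ℝ^n, and y a projection of x onto Ω. Then (|y|_i - |y|_j)(|x|_i - |x|_j) ≥ 0 for all indices i, j, where |·| denotes componentwise absolute value. -/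
open scoped RealInnerProductSpace

noncomputable section

/-! Flipping signs and swapping the coordinates `i`, `j` of `y` gives the point
`z` of `Ω` with `z k = sign (x k) * |y (swap i j k)|`. Comparing `‖z - x‖` with `‖y - x‖`
coordinatewise, the swap costs exactly `2 (|y i| - |y j|) (|x i| - |x j|)` relative to the
lower bound `∑ (|y k| - |x k|) ^ 2 ≤ ‖y - x‖ ^ 2`, so minimality of `y` forces this product
to be nonnegative. -/

lemma sq_abs_sub_abs_le_sq_sub (a b : ℝ) : (|a| - |b|) ^ 2 ≤ (a - b) ^ 2 :=
  sq_le_sq.mpr (abs_abs_sub_abs_le_abs_sub a b)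

lemma sum_sq_sub_comp_swap {ι : Type*} [Fintype ι] [DecidableEq ι] (a b : ι → ℝ) (i j : ι) :
    ∑ k, (a (Equiv.swap i j k) - b k) ^ 2 =
      ∑ k, (a k - b k) ^ 2 + 2 * ((a i - a j) * (b i - b j)) := by
  rcases eq_or_ne i j with rfl | hij
  · simp
  rw [← sub_eq_iff_eq_add', ← Finset.sum_sub_distrib,
    Finset.sum_eq_add_of_mem i j (Finset.mem_univ i) (Finset.mem_univ j) hij
      (fun k _ hk => by rw [Equiv.swap_apply_of_ne_of_ne hk.1 hk.2, sub_self]),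
    Equiv.swap_apply_left, Equiv.swap_apply_right]
  ring

lemma IsSignFreeSymmSet.mem_of_abs_eq {n : ℕ} {Ω : Set (E n)} (hΩ : IsSignFreeSymmSet Ω)
    {v w : E n} (hv : v ∈ Ω) (hw : ∀ k, |w k| = |v k|) : w ∈ Ω := by
  let ε : Fin n → ℝ := fun k => if w k = v k then 1 else -1
  have hε : ∀ k, ε k = 1 ∨ ε k = -1 := fun k => by
    simp only [ε]; split_ifs <;> simp
  suffices w = WithLp.toLp 2 (fun k => ε k * v k) from this ▸ hΩ.2 v hv ε hε
  ext k
  simp only [ε]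
  split_ifs with h
  · simp [h]
  · have h' := (abs_eq_abs.mp (hw k)).resolve_left h
    simp [h']

lemma IsSignFreeSymmSet.mem_of_abs_eq_comp_perm {n : ℕ} {Ω : Set (E n)}
    (hΩ : IsSignFreeSymmSet Ω) {v w : E n} (hv : v ∈ Ω) (σ : Equiv.Perm (Fin n))
    (hw : ∀ k, |w k| = |v (σ k)|) : w ∈ Ω :=
  hΩ.mem_of_abs_eq (hΩ.1 v hv σ) hw

lemma IsProj.sum_sq_le {n : ℕ} {Ω : Set (E n)} {x y : E n} (hy : IsProj Ω x y) {z : E n}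
    (hz : z ∈ Ω) : ∑ k, (y k - x k) ^ 2 ≤ ∑ k, (z k - x k) ^ 2 := by
  have h := pow_le_pow_left₀ (norm_nonneg _) (hy.2 z hz) 2
  simpa only [EuclideanSpace.real_norm_sq_eq, PiLp.sub_apply] using h

theorem stmt2_general {n : ℕ} (Ω : Set (E n)) (hsf : IsSignFreeSymmSet Ω)
    (x y : E n) (hy : IsProj Ω x y) :
    ∀ i j : Fin n, (|y i| - |y j|) * (|x i| - |x j|) ≥ 0 := by
  intro i j
  let σ := Equiv.swap i j
  let z : E n := WithLp.toLp 2 fun k => if 0 ≤ x k then |y (σ k)| else -|y (σ k)|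
  have hzΩ : z ∈ Ω := hsf.mem_of_abs_eq_comp_perm hy.1 σ fun k => by
    simp only [z]; split_ifs <;> simp
  have hz : ∀ k, (z k - x k) ^ 2 = (|y (σ k)| - |x k|) ^ 2 := fun k => by
    simp only [z]
    split_ifs with h
    · rw [abs_of_nonneg h]
    · rw [abs_of_neg (not_le.mp h)]; ring
  have hmin := hy.sum_sq_le hzΩ
  have hlower : ∑ k, (|y k| - |x k|) ^ 2 ≤ ∑ k, (y k - x k) ^ 2 :=
    Finset.sum_le_sum fun k _ => sq_abs_sub_abs_le_sq_sub _ _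
  rw [Finset.sum_congr rfl fun k _ => hz k,
    sum_sq_sub_comp_swap (fun k => |y k|) (fun k => |x k|) i j] at hmin
  linarith

theorem stmt2 {n : ℕ} (Ω : Set (E n)) (hcl : IsClosed Ω) (hsf : IsSignFreeSymmSet Ω)
    (hconv : Convex ℝ Ω) (x y : E n) (hy : IsProj Ω x y) :
    ∀ i j : Fin n, (|y i| - |y j|) * (|x i| - |x j|) ≥ 0 :=
  stmt2_general Ω hsf x y hy
end
end

section
/- Let Ω be a nonnegative symmetric closed convex set in ℝ^n, s ∈ {1,...,n-1}, and C_s = {x ∈ ℝ^n : ‖x‖₀ ≤ s} the set of s-sparse vectors. For any x ∈ ℝ^n, any y in the projection of x onto C_s ∩ Ω, and any index set T with supp(y) ⊆ T and |T| ≤ s, the restriction y_T is the (unique) projection of x_T onto Ω_T = {z ∈ ℝ^{|T|} : the vector with support in T equal to z lies in Ω}. -/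
open scoped RealInnerProductSpace

noncomputable section

/-! Every vector vanishing off `T` is `s`-sparse, so `y` is a nearest point to `x` in the convex set
of vectors of `Ω` vanishing off `T`, and nearest points in convex sets of a Euclidean space are
unique. -/

/-- Strict convexity of the norm: a second nearest point of a convex set would make the midpoint
of the two strictly nearer. -/
theorem Convex.eq_of_norm_sub_le_of_forall_norm_sub_le {F : Type*} [NormedAddCommGroup F]
    [NormedSpace ℝ F] [StrictConvexSpace ℝ F] {K : Set F} (hK : Convex ℝ K) {x y z : F}
    (hy : y ∈ K) (hmin : ∀ w ∈ K, ‖y - x‖ ≤ ‖w - x‖) (hz : z ∈ K) (hle : ‖z - x‖ ≤ ‖y - x‖) :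
    z = y := by
  by_contra hne
  have hmid : (1 / 2 : ℝ) • y + (1 / 2 : ℝ) • z ∈ K :=
    hK hy hz (by norm_num) (by norm_num) (by norm_num)
  have hlt : ‖(1 / 2 : ℝ) • (y - x) + (1 / 2 : ℝ) • (z - x)‖ < ‖y - x‖ :=
    norm_combo_lt_of_ne le_rfl hle (fun h => hne (sub_left_injective h).symm)
      (by norm_num) (by norm_num) (by norm_num)
  have hshift : (1 / 2 : ℝ) • (y - x) + (1 / 2 : ℝ) • (z - x)
      = (1 / 2 : ℝ) • y + (1 / 2 : ℝ) • z - x := by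
    module
  exact (hmin _ hmid).not_gt (hshift ▸ hlt)

section Support

variable {n : ℕ}

theorem spt_subset_iff {x : E n} {T : Finset (Fin n)} : spt x ⊆ T ↔ ∀ i ∉ T, x i = 0 := by
  simp only [Finset.subset_iff, spt, Finset.mem_filter, Finset.mem_univ, true_and]
  exact ⟨fun h i hi => by_contra fun hx => hi (h hx), fun h i hx => by_contra fun hi => hx (h i hi)⟩

theorem mem_Cs_of_spt_subset {s : ℕ} {x : E n} {T : Finset (Fin n)} (hx : spt x ⊆ T)
    (hT : T.card ≤ s) : x ∈ Cs n s :=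
  (Finset.card_le_card hx).trans hT

theorem convex_setOf_forall_notMem_eq_zero (T : Finset (Fin n)) :
    Convex ℝ {z : E n | ∀ i ∉ T, z i = 0} := by
  intro u hu v hv a b _ _ _ i hi
  simp [hu i hi, hv i hi]

end Support

theorem stmt3_general {n s : ℕ} (Ω : Set (E n))
    (hconv : Convex ℝ Ω)
    (x y : E n) (hy : IsProj (Cs n s ∩ Ω) x y)
    (T : Finset (Fin n)) (hT1 : spt y ⊆ T) (hT2 : T.card ≤ s) :
    (y ∈ Ω ∧ ∀ i ∉ T, y i = 0) ∧
    (∀ z ∈ Ω, (∀ i ∉ T, z i = 0) → ‖y - x‖ ≤ ‖z - x‖) ∧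
    (∀ z ∈ Ω, (∀ i ∉ T, z i = 0) → ‖z - x‖ ≤ ‖y - x‖ → z = y) := by
  obtain ⟨⟨-, hyΩ⟩, hmin⟩ := hy
  have hyT : ∀ i ∉ T, y i = 0 := spt_subset_iff.1 hT1
  have hminT : ∀ z ∈ Ω, (∀ i ∉ T, z i = 0) → ‖y - x‖ ≤ ‖z - x‖ := fun z hz hzT =>
    hmin z ⟨mem_Cs_of_spt_subset (spt_subset_iff.2 hzT) hT2, hz⟩
  refine ⟨⟨hyΩ, hyT⟩, hminT, fun z hz hzT hle => ?_⟩
  exact (hconv.inter (convex_setOf_forall_notMem_eq_zero T)).eq_of_norm_sub_le_of_forall_norm_sub_le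
    ⟨hyΩ, hyT⟩ (fun w hw => hminT w hw.1 hw.2) ⟨hz, hzT⟩ hle

theorem stmt3 {n s : ℕ} (Ω : Set (E n)) (hcl : IsClosed Ω) (hnn : IsNonnegSymmSet Ω)
    (hconv : Convex ℝ Ω) (hs1 : 1 ≤ s) (hs2 : s < n)
    (x y : E n) (hy : IsProj (Cs n s ∩ Ω) x y)
    (T : Finset (Fin n)) (hT1 : spt y ⊆ T) (hT2 : T.card ≤ s) :
    (y ∈ Ω ∧ ∀ i ∉ T, y i = 0) ∧
    (∀ z ∈ Ω, (∀ i ∉ T, z i = 0) → ‖y - x‖ ≤ ‖z - x‖) ∧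
    (∀ z ∈ Ω, (∀ i ∉ T, z i = 0) → ‖z - x‖ ≤ ‖y - x‖ → z = y) :=
  stmt3_general Ω hconv x y hy T hT1 hT2
end
end

section
/- Let Ω be a nonnegative symmetric closed convex set in ℝ^n, s ∈ {1,...,n-1}, and a ∈ ℝ^n. Let σ be a permutation sorting the entries of a in non-ascending order and T = {σ(1),...,σ(s)}. Define y by y_T = proj_{Ω_T}(a_T) and y_i = 0 for i ∉ T. Then y is a projection of a onto C_s ∩ Ω, where C_s = {x : ‖x‖₀ ≤ s}. -/
open scoped RealInnerProductSpace

noncomputable section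

theorem spt_comp {n : ℕ} (z : E n) (π : Equiv.Perm (Fin n)) :
    spt (WithLp.toLp 2 (fun k => z (π k)) : E n) = (spt z).image π.symm := by
  ext k
  simp only [spt, Finset.mem_filter, Finset.mem_image, Finset.mem_univ, true_and]
  constructor
  · intro h; exact ⟨π k, h, π.symm_apply_apply k⟩
  · rintro ⟨m, hm, rfl⟩; rw [π.apply_symm_apply]; exact hm

theorem norm_le_of_sq_sum {n : ℕ} (u v a : E n)
    (h : ∑ k, (u k - a k) ^ 2 ≤ ∑ k, (v k - a k) ^ 2) : ‖u - a‖ ≤ ‖v - a‖ := by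
  rw [EuclideanSpace.norm_eq, EuclideanSpace.norm_eq]
  apply Real.sqrt_le_sqrt
  simpa [Real.norm_eq_abs, sq_abs] using h

theorem sum_split2 {n : ℕ} (i j : Fin n) (hij : i ≠ j) (f : Fin n → ℝ) :
    ∑ k, f k = f i + f j + ∑ k ∈ (Finset.univ.erase i).erase j, f k := by
  rw [← Finset.add_sum_erase _ f (Finset.mem_univ i),
      ← Finset.add_sum_erase _ f (Finset.mem_erase.2 ⟨hij.symm, Finset.mem_univ j⟩)]
  ring

theorem stmt4 {n s : ℕ} (Ω : Set (E n)) (hcl : IsClosed Ω) (hnn : IsNonnegSymmSet Ω)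
    (hconv : Convex ℝ Ω) (hs1 : 1 ≤ s) (hs2 : s < n)
    (a : E n) (σ : Equiv.Perm (Fin n))
    (hsort : ∀ i j : Fin n, i ≤ j → a (σ j) ≤ a (σ i))
    (T : Finset (Fin n))
    (hT : T = (Finset.univ.filter (fun j : Fin n => (j : ℕ) < s)).image σ)
    (y : E n) (hyΩ : y ∈ Ω) (hy0 : ∀ i ∉ T, y i = 0)
    (hymin : ∀ z ∈ Ω, (∀ i ∉ T, z i = 0) → ‖y - a‖ ≤ ‖z - a‖) :
    IsProj (Cs n s ∩ Ω) a y := by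
  have hmemT : ∀ i : Fin n, i ∈ T ↔ ((σ.symm i : Fin n) : ℕ) < s := by
    intro i
    subst hT
    simp only [Finset.mem_image, Finset.mem_filter, Finset.mem_univ, true_and]
    constructor
    · rintro ⟨j, hj, rfl⟩; rwa [σ.symm_apply_apply]
    · intro h; exact ⟨σ.symm i, h, σ.apply_symm_apply i⟩
  have hTcard : T.card = s := by
    subst hT
    rw [Finset.card_image_of_injective _ σ.injective]
    have : (Finset.univ.filter (fun j : Fin n => (j : ℕ) < s)) = Finset.Iio ⟨s, hs2⟩ := by
      ext j; simp [Fin.lt_def]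
    rw [this, Fin.card_Iio]
  have horder : ∀ i ∉ T, ∀ j ∈ T, a i ≤ a j := by
    intro i hi j hj
    have h1 : s ≤ ((σ.symm i : Fin n) : ℕ) := not_lt.1 (fun h => hi ((hmemT i).2 h))
    have h2 : ((σ.symm j : Fin n) : ℕ) < s := (hmemT j).1 hj
    have := hsort (σ.symm j) (σ.symm i) (by rw [Fin.le_def]; omega)
    rw [σ.apply_symm_apply, σ.apply_symm_apply] at this
    exact this
  constructor
  · refine ⟨?_, hyΩ⟩
    have hsub : spt y ⊆ T := by
      intro i hi
      by_contra h
      exact (Finset.mem_filter.1 hi).2 (hy0 i h)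
    calc (spt y).card ≤ T.card := Finset.card_le_card hsub
      _ = s := hTcard
  · rintro z ⟨hzs, hzΩ⟩
    have key : ∀ m : ℕ, ∀ z : E n, z ∈ Ω → (spt z).card ≤ s → (spt z \ T).card ≤ m →
        ‖y - a‖ ≤ ‖z - a‖ := by
      intro m
      induction m with
      | zero =>
        intro z hzΩ _ hc
        apply hymin z hzΩ
        intro i hi
        by_contra h
        have : i ∈ spt z \ T := Finset.mem_sdiff.2 ⟨Finset.mem_filter.2 ⟨Finset.mem_univ i, h⟩, hi⟩
        have := Finset.card_pos.2 ⟨i, this⟩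
        omega
      | succ m ih =>
        intro z hzΩ hzs hc
        rcases Nat.eq_zero_or_pos (spt z \ T).card with h0 | hpos
        · exact ih z hzΩ hzs (by omega)
        · obtain ⟨i, hi⟩ := Finset.card_pos.1 hpos
          obtain ⟨hiz, hiT⟩ := Finset.mem_sdiff.1 hi
          -- find j ∈ T \ spt z
          have hinter : (spt z \ T).card + (spt z ∩ T).card = (spt z).card :=
            Finset.card_sdiff_add_card_inter _ _
          have hTZ : (T \ spt z).card + (T ∩ spt z).card = T.card :=
            Finset.card_sdiff_add_card_inter _ _
          have hcomm : (T ∩ spt z).card = (spt z ∩ T).card := by rw [Finset.inter_comm]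
          have : 0 < (T \ spt z).card := by omega
          obtain ⟨j, hj⟩ := Finset.card_pos.1 this
          obtain ⟨hjT, hjz⟩ := Finset.mem_sdiff.1 hj
          have hzj : z j = 0 := by
            by_contra h
            exact hjz (Finset.mem_filter.2 ⟨Finset.mem_univ j, h⟩)
          have hzi : z i ≠ 0 := (Finset.mem_filter.1 hiz).2
          have hij : i ≠ j := fun h => hiT (h ▸ hjT)
          have haij : a i ≤ a j := horder i hiT j hjT
          have hzi0 : 0 ≤ z i := hnn.2 z hzΩ i
          have hswap : ∀ k : Fin n,
              z (Equiv.swap i j k) = if k = i then z j else if k = j then z i else z k := by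
            intro k
            rcases eq_or_ne k i with rfl | h1
            · rw [Equiv.swap_apply_left, if_pos rfl]
            · rcases eq_or_ne k j with rfl | h2
              · rw [Equiv.swap_apply_right, if_neg (fun h => hij h.symm), if_pos rfl]
              · rw [Equiv.swap_apply_of_ne_of_ne h1 h2, if_neg h1, if_neg h2]
          set z' : E n := (WithLp.toLp 2 (fun k => z (Equiv.swap i j k)) : E n) with hz'
          have hz'Ω : z' ∈ Ω := hnn.1 z hzΩ (Equiv.swap i j)
          have happ : ∀ k : Fin n, z' k = if k = i then z j else if k = j then z i else z k := by
            intro k; rw [hz']; exact hswap k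
          have hspt' : spt z' = insert j ((spt z).erase i) := by
            ext k
            simp only [spt, Finset.mem_filter, Finset.mem_univ, true_and, Finset.mem_insert,
              Finset.mem_erase, happ k]
            by_cases h1 : k = i
            · rw [if_pos h1]
              simp [h1, hzj, hij, Ne.symm hij]
            · rw [if_neg h1]
              by_cases h2 : k = j
              · rw [if_pos h2]
                simp [h2, hzi, h1]
              · rw [if_neg h2]
                simp [h1, h2]
          have hcard' : (spt z').card ≤ s := by
            rw [hspt', Finset.card_insert_of_notMem (by
              simp only [Finset.mem_erase]
              rintro ⟨-, h⟩
              exact hjz h), Finset.card_erase_of_mem hiz]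
            omega
          have hsdiff' : spt z' \ T = (spt z \ T).erase i := by
            rw [hspt']
            ext k
            simp only [Finset.mem_sdiff, Finset.mem_insert, Finset.mem_erase]
            constructor
            · rintro ⟨h1 | ⟨h2, h3⟩, h4⟩
              · exact absurd (h1 ▸ hjT) h4
              · exact ⟨h2, h3, h4⟩
            · rintro ⟨h1, h2, h3⟩
              exact ⟨Or.inr ⟨h1, h2⟩, h3⟩
          have hcd : (spt z' \ T).card ≤ m := by
            rw [hsdiff', Finset.card_erase_of_mem hi]
            omega
          have hnorm : ‖z' - a‖ ≤ ‖z - a‖ := by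
            apply norm_le_of_sq_sum
            rw [sum_split2 i j hij (fun k => (z' k - a k) ^ 2),
                sum_split2 i j hij (fun k => (z k - a k) ^ 2)]
            have he : ∑ k ∈ (Finset.univ.erase i).erase j, (z' k - a k) ^ 2
                = ∑ k ∈ (Finset.univ.erase i).erase j, (z k - a k) ^ 2 := by
              apply Finset.sum_congr rfl
              intro k hk
              simp only [Finset.mem_erase] at hk
              rw [happ k, if_neg hk.2.1, if_neg hk.1]
            rw [he]
            have h1 : z' i = z j := by rw [happ i, if_pos rfl]
            have h2 : z' j = z i := by
              rw [happ j, if_neg (fun h => hij h.symm), if_pos rfl]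
            rw [h1, h2, hzj]
            nlinarith [mul_nonneg hzi0 (sub_nonneg.2 haij)]
          exact le_trans (ih z' hz'Ω hcard' hcd) hnorm
    exact key (spt z \ T).card z hzΩ hzs le_rfl
end
end

section
/- Let Ω be a nonnegative symmetric closed convex set in ℝ^n, s ∈ {1,...,n-1}, and a ∈ ℝ^n. Suppose y is a projection of a onto C_s ∩ Ω with ‖y‖₀ < s. Then y is the unique projection of a onto C_s ∩ Ω, i.e., the set of minimizers of ‖x - a‖ over x ∈ C_s ∩ Ω is the singleton {y}. -/
open scoped RealInnerProductSpace

noncomputable section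

/-!
Two projections `y, z` whose supports together have at most `s` elements coincide: their midpoint
is feasible, and by strict convexity of the norm it would be strictly closer to `a` if `y ≠ z`.
Since swapping two coordinates preserves `C_s ∩ Ω`, a projection `w` satisfies
`(w j - w k) (a j - a k) ≥ 0`; as `w ≥ 0`, this gives `a j = a k` whenever
`j ∈ supp z \ supp y` and `k ∈ supp y \ supp z`. Swapping `j, k` in `z` then gives another
projection with one index fewer outside `supp y`, so by induction `z` is `y` with two coordinates
swapped; but then `supp y ∪ supp z` has at most `‖y‖₀ + 1 ≤ s` elements.
-/

section

variable {n s : ℕ}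

def permCoords (σ : Equiv.Perm (Fin n)) (x : E n) : E n := WithLp.toLp 2 (fun i => x (σ i))

@[simp]
lemma permCoords_apply (σ : Equiv.Perm (Fin n)) (x : E n) (i : Fin n) :
    permCoords σ x i = x (σ i) := rfl

lemma permCoords_swap_permCoords_swap (j k : Fin n) (x : E n) :
    permCoords (Equiv.swap j k) (permCoords (Equiv.swap j k) x) = x := by
  ext i
  simp

lemma mem_spt {x : E n} {i : Fin n} : i ∈ spt x ↔ x i ≠ 0 := by
  simp [spt]

lemma spt_permCoords (σ : Equiv.Perm (Fin n)) (x : E n) :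
    spt (permCoords σ x) = (spt x).map σ.symm.toEmbedding := by
  ext i
  simp [mem_spt]

lemma spt_permCoords_swap_subset {x : E n} {j k : Fin n} (hk : k ∉ spt x) :
    spt (permCoords (Equiv.swap j k) x) ⊆ insert k ((spt x).erase j) := by
  intro i hi
  rw [mem_spt, permCoords_apply] at hi
  rw [mem_spt, not_not] at hk
  rw [Finset.mem_insert, Finset.mem_erase, mem_spt]
  rcases eq_or_ne i j with rfl | hij
  · simp [hk] at hi
  rcases eq_or_ne i k with rfl | hik
  · exact .inl rfl
  · rw [Equiv.swap_apply_of_ne_of_ne hij hik] at hi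
    exact .inr ⟨hij, hi⟩

lemma card_spt_permCoords_swap_sdiff_lt {y z : E n} {j k : Fin n} (hjz : j ∈ spt z)
    (hjy : j ∉ spt y) (hky : k ∈ spt y) (hkz : k ∉ spt z) :
    (spt (permCoords (Equiv.swap j k) z) \ spt y).card < (spt z \ spt y).card := by
  refine (Finset.card_le_card ?_).trans_lt
    (Finset.card_erase_lt_of_mem (Finset.mem_sdiff.2 ⟨hjz, hjy⟩))
  intro i hi
  rw [Finset.mem_sdiff] at hi
  rcases Finset.mem_insert.1 (spt_permCoords_swap_subset hkz hi.1) with rfl | hiz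
  · exact absurd hky hi.2
  · exact Finset.mem_erase.2 ⟨Finset.ne_of_mem_erase hiz,
      Finset.mem_sdiff.2 ⟨Finset.mem_of_mem_erase hiz, hi.2⟩⟩

lemma card_spt_union_spt_permCoords_swap_le {y : E n} {j : Fin n} (hjy : j ∉ spt y) (k : Fin n) :
    (spt y ∪ spt (permCoords (Equiv.swap j k) y)).card ≤ (spt y).card + 1 := by
  refine (Finset.card_le_card (Finset.union_subset (Finset.subset_insert j _) ?_)).trans
    (Finset.card_insert_le j _)
  rw [Equiv.swap_comm]
  exact (spt_permCoords_swap_subset hjy).trans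
    (Finset.insert_subset_insert _ (Finset.erase_subset _ _))

lemma spt_midpoint_subset (y z : E n) : spt ((1 / 2 : ℝ) • (y + z)) ⊆ spt y ∪ spt z := by
  intro i
  simp only [mem_spt, Finset.mem_union, PiLp.smul_apply, PiLp.add_apply, smul_eq_mul]
  contrapose!
  rintro ⟨hy, hz⟩
  simp [hy, hz]

lemma isSymmSet_Cs : IsSymmSet (Cs n s) := fun x hx σ => by
  change (spt (permCoords σ x)).card ≤ s
  rw [spt_permCoords, Finset.card_map]
  exact hx

lemma IsSymmSet.inter {X Y : Set (E n)} (hX : IsSymmSet X) (hY : IsSymmSet Y) :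
    IsSymmSet (X ∩ Y) := fun x hx σ => ⟨hX x hx.1 σ, hY x hx.2 σ⟩

lemma norm_permCoords_swap_sub_sq {j k : Fin n} (hjk : j ≠ k) (x a : E n) :
    ‖permCoords (Equiv.swap j k) x - a‖ ^ 2 = ‖x - a‖ ^ 2 + 2 * (x j - x k) * (a j - a k) := by
  rw [← sub_eq_iff_eq_add', EuclideanSpace.real_norm_sq_eq, EuclideanSpace.real_norm_sq_eq,
    ← Finset.sum_sub_distrib, Fintype.sum_eq_add j k hjk]
  · simp only [PiLp.sub_apply, permCoords_apply, Equiv.swap_apply_left, Equiv.swap_apply_right]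
    ring
  · rintro i ⟨hij, hik⟩
    simp [Equiv.swap_apply_of_ne_of_ne hij hik]

namespace IsProj

variable {X : Set (E n)} {a w y z : E n}

lemma norm_sub_eq (hy : IsProj X a y) (hz : IsProj X a z) : ‖y - a‖ = ‖z - a‖ :=
  le_antisymm (hy.2 z hz.1) (hz.2 y hy.1)

lemma eq_of_midpoint_mem (hy : IsProj X a y) (hz : IsProj X a z)
    (hm : (1 / 2 : ℝ) • (y + z) ∈ X) : z = y := by
  by_contra hne
  have hlt := (norm_midpoint_lt_iff (hy.norm_sub_eq hz)).2 (sub_left_injective.ne (Ne.symm hne))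
  rw [show (1 / 2 : ℝ) • (y - a + (z - a)) = (1 / 2 : ℝ) • (y + z) - a by module] at hlt
  exact (hy.2 _ hm).not_gt hlt

lemma sub_mul_sub_nonneg (hX : IsSymmSet X) (hw : IsProj X a w) (j k : Fin n) :
    0 ≤ (w j - w k) * (a j - a k) := by
  rcases eq_or_ne j k with rfl | hjk
  · simp
  have hle := pow_le_pow_left₀ (norm_nonneg _) (hw.2 _ (hX w hw.1 (Equiv.swap j k))) 2
  have := norm_permCoords_swap_sub_sq hjk w a
  simp only [permCoords] at this
  linarith

lemma permCoords_swap (hX : IsSymmSet X) (hw : IsProj X a w) {j k : Fin n} (ha : a j = a k) :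
    IsProj X a (permCoords (Equiv.swap j k) w) := by
  rcases eq_or_ne j k with rfl | hjk
  · simpa [permCoords] using hw
  have hnorm : ‖permCoords (Equiv.swap j k) w - a‖ = ‖w - a‖ := by
    rw [← sq_eq_sq₀ (norm_nonneg _) (norm_nonneg _), norm_permCoords_swap_sub_sq hjk, ha]
    ring
  exact ⟨hX w hw.1 _, fun x hx => hnorm ▸ hw.2 x hx⟩

variable {Ω : Set (E n)}

lemma eq_of_card_spt_union_le (hconv : Convex ℝ Ω) (hy : IsProj (Cs n s ∩ Ω) a y)
    (hz : IsProj (Cs n s ∩ Ω) a z) (hyz : (spt y ∪ spt z).card ≤ s) : z = y := by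
  refine hy.eq_of_midpoint_mem hz ⟨(Finset.card_le_card (spt_midpoint_subset y z)).trans hyz, ?_⟩
  rw [smul_add]
  exact hconv hy.1.2 hz.1.2 (by norm_num) (by norm_num) (by norm_num)

lemma apply_le_of_mem_spt (hΩ : IsNonnegSymmSet Ω) (hw : IsProj (Cs n s ∩ Ω) a w)
    {j k : Fin n} (hj : j ∈ spt w) (hk : k ∉ spt w) : a k ≤ a j := by
  rw [mem_spt] at hj
  rw [mem_spt, not_not] at hk
  have hpos : 0 < w j := (hΩ.2 w hw.1.2 j).lt_of_ne' hj
  have := hw.sub_mul_sub_nonneg (isSymmSet_Cs.inter hΩ.1) j k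
  rw [hk, sub_zero, mul_nonneg_iff_of_pos_left hpos] at this
  linarith

end IsProj

end

theorem stmt5_general {n s : ℕ} (Ω : Set (E n)) (hnn : IsNonnegSymmSet Ω)
    (hconv : Convex ℝ Ω)
    (a y : E n) (hy : IsProj (Cs n s ∩ Ω) a y) (hcard : (spt y).card < s) :
    ∀ z : E n, IsProj (Cs n s ∩ Ω) a z → z = y := by
  intro z hz
  induction hd : (spt z \ spt y).card using Nat.strong_induction_on generalizing z with
  | _ d ih =>
  by_contra hne
  have hunion : s < (spt y ∪ spt z).card := by
    by_contra! h
    exact hne (hy.eq_of_card_spt_union_le hconv hz h)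
  obtain ⟨j, hj, hjy⟩ : ∃ j ∈ spt y ∪ spt z, j ∉ spt y :=
    Finset.exists_mem_notMem_of_card_lt_card (hcard.trans hunion)
  obtain ⟨k, hk, hkz⟩ : ∃ k ∈ spt y ∪ spt z, k ∉ spt z :=
    Finset.exists_mem_notMem_of_card_lt_card (hz.1.1.trans_lt hunion)
  have hjz : j ∈ spt z := (Finset.mem_union.1 hj).resolve_left hjy
  have hky : k ∈ spt y := (Finset.mem_union.1 hk).resolve_right hkz
  have ha : a j = a k :=
    le_antisymm (hy.apply_le_of_mem_spt hnn hky hjy) (hz.apply_le_of_mem_spt hnn hjz hkz)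
  have hswap : permCoords (Equiv.swap j k) z = y :=
    ih _ (hd ▸ card_spt_permCoords_swap_sdiff_lt hjz hjy hky hkz) _
      (hz.permCoords_swap (isSymmSet_Cs.inter hnn.1) ha) rfl
  have hz_eq : z = permCoords (Equiv.swap j k) y := by
    rw [← hswap, permCoords_swap_permCoords_swap]
  have := card_spt_union_spt_permCoords_swap_le hjy k
  rw [← hz_eq] at this
  omega

theorem stmt5 {n s : ℕ} (Ω : Set (E n)) (hcl : IsClosed Ω) (hnn : IsNonnegSymmSet Ω)
    (hconv : Convex ℝ Ω) (hs1 : 1 ≤ s) (hs2 : s < n)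
    (a y : E n) (hy : IsProj (Cs n s ∩ Ω) a y) (hcard : (spt y).card < s) :
    ∀ z : E n, IsProj (Cs n s ∩ Ω) a z → z = y :=
  stmt5_general Ω hnn hconv a y hy hcard
end
end

section
/- Let Ω be a nonnegative symmetric closed convex set in ℝ^n, s ∈ {1,...,n-1}, and a ∈ ℝ^n. Suppose y is a projection of a onto C_s ∩ Ω such that min_{i ∈ supp(y)} a_i > max_{i ∉ supp(y)} a_i. Then y is the unique projection of a onto C_s ∩ Ω. -/
open scoped RealInnerProductSpace

noncomputable section

lemma normsq_eq {n : ℕ} (x : E n) : ‖x‖ ^ 2 = ∑ k, (x k) ^ 2 := by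
  rw [EuclideanSpace.norm_eq, Real.sq_sqrt (by positivity)]
  simp [Real.norm_eq_abs, sq_abs]

theorem stmt7 {n s : ℕ} (Ω : Set (E n)) (hcl : IsClosed Ω) (hnn : IsNonnegSymmSet Ω)
    (hconv : Convex ℝ Ω) (hs1 : 1 ≤ s) (hs2 : s < n)
    (a y : E n) (hy : IsProj (Cs n s ∩ Ω) a y)
    (hne : (spt y).Nonempty) (hne' : spt y ≠ Finset.univ)
    (hgap : ∀ i ∈ spt y, ∀ j ∉ spt y, a j < a i) :
    ∀ z : E n, IsProj (Cs n s ∩ Ω) a z → z = y := by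
  intro z hz
  by_cases hyz : spt y ⊆ spt z ∨ spt z ⊆ spt y
  · -- nested supports: midpoint argument
    have hcard : (spt y ∪ spt z).card ≤ s := by
      rcases hyz with h | h
      · rw [Finset.union_eq_right.mpr h]; exact hz.1.1
      · rw [Finset.union_eq_left.mpr h]; exact hy.1.1
    set m : E n := (1/2 : ℝ) • y + (1/2 : ℝ) • z with hm
    have hmΩ : m ∈ Ω := hconv hy.1.2 hz.1.2 (by norm_num) (by norm_num) (by norm_num)
    have hmC : m ∈ Cs n s := by
      have hsub : spt m ⊆ spt y ∪ spt z := by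
        intro k hk
        simp only [spt, Finset.mem_filter, Finset.mem_univ, true_and] at hk
        rw [Finset.mem_union]
        simp only [spt, Finset.mem_filter, Finset.mem_univ, true_and]
        by_contra hc
        push_neg at hc
        apply hk
        have hmk : m k = 1/2 * y k + 1/2 * z k := by
          simp [hm]
        rw [hmk, hc.1, hc.2]; ring
      exact le_trans (Finset.card_le_card hsub) hcard
    have h1 : ‖y - a‖ ≤ ‖m - a‖ := hy.2 m ⟨hmC, hmΩ⟩
    have h2 : ‖z - a‖ = ‖y - a‖ := le_antisymm (hz.2 y hy.1) (hy.2 z hz.1)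
    have hma : m - a = (1/2 : ℝ) • ((y - a) + (z - a)) := by
      rw [hm]; module
    have h3 : ‖m - a‖ = (1/2) * ‖(y - a) + (z - a)‖ := by
      rw [hma, norm_smul]; norm_num
    have h4 : ‖(y-a) + (z-a)‖^2 = ‖y-a‖^2 + 2 * ⟪y-a, z-a⟫ + ‖z-a‖^2 :=
      norm_add_sq_real _ _
    have h5 : ‖(y-a) - (z-a)‖^2 = ‖y-a‖^2 - 2 * ⟪y-a, z-a⟫ + ‖z-a‖^2 :=
      norm_sub_sq_real _ _
    have h6 : (y-a) - (z-a) = y - z := by abel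
    have h8 : ‖y - a‖^2 ≤ ‖m - a‖^2 := by
      apply pow_le_pow_left₀ (norm_nonneg _) h1
    rw [h3] at h8
    have h2' : ‖z - a‖^2 = ‖y - a‖^2 := by rw [h2]
    have h7 : ‖y - z‖^2 ≤ 0 := by
      rw [← h6, h5]; nlinarith [h4, h8, h2']
    have h9 : ‖y - z‖ = 0 := by nlinarith [norm_nonneg (y - z)]
    exact (sub_eq_zero.mp (norm_eq_zero.mp h9)).symm
  · -- crossing supports: swap argument gives contradiction
    exfalso
    push_neg at hyz
    obtain ⟨hn1, hn2⟩ := hyz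
    obtain ⟨i, hiy, hiz⟩ := Finset.not_subset.mp hn1
    obtain ⟨j, hjz, hjy⟩ := Finset.not_subset.mp hn2
    have hij : i ≠ j := fun h => hjy (h ▸ hiy)
    have haji : a j < a i := hgap i hiy j hjy
    have hzi : z i = 0 := by
      by_contra h
      exact hiz (by simp [spt, h])
    have hzj : 0 < z j := by
      have h0 : z j ≠ 0 := by simpa [spt] using hjz
      exact lt_of_le_of_ne (hnn.2 z hz.1.2 j) (Ne.symm h0)
    set z' : E n := WithLp.toLp 2 (fun k => z (Equiv.swap i j k)) with hzdef
    have hz'Ω : z' ∈ Ω := hnn.1 z hz.1.2 (Equiv.swap i j)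
    have hz'C : z' ∈ Cs n s := by
      have hsub : spt z' ⊆ (spt z).image (Equiv.swap i j) := by
        intro k hk
        have hk' : z (Equiv.swap i j k) ≠ 0 := by simpa [spt, hzdef] using hk
        refine Finset.mem_image.mpr ⟨Equiv.swap i j k, by simp [spt, hk'], by simp⟩
      calc (spt z').card ≤ ((spt z).image (Equiv.swap i j)).card :=
            Finset.card_le_card hsub
        _ ≤ (spt z).card := Finset.card_image_le
        _ ≤ s := hz.1.1
    have hdiff : (∑ k, (z' k - a k)^2) - (∑ k, (z k - a k)^2)
        = 2 * z j * (a j - a i) := by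
      rw [← Finset.sum_sub_distrib]
      have hrest : ∑ k, ((z' k - a k)^2 - (z k - a k)^2)
          = ∑ k ∈ ({i, j} : Finset (Fin n)), ((z' k - a k)^2 - (z k - a k)^2) := by
        symm
        apply Finset.sum_subset (Finset.subset_univ _)
        intro k _ hk
        simp only [Finset.mem_insert, Finset.mem_singleton] at hk
        push_neg at hk
        have hzk : z' k = z k := by
          show z (Equiv.swap i j k) = z k
          rw [Equiv.swap_apply_of_ne_of_ne hk.1 hk.2]
        rw [hzk]; ring
      rw [hrest, Finset.sum_pair hij]
      have e1 : z' i = z j := by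
        show z (Equiv.swap i j i) = z j
        rw [Equiv.swap_apply_left]
      have e2 : z' j = z i := by
        show z (Equiv.swap i j j) = z i
        rw [Equiv.swap_apply_right]
      rw [e1, e2, hzi]; ring
    have hlt : ‖z' - a‖^2 < ‖z - a‖^2 := by
      have n1 : ‖z' - a‖^2 = ∑ k, (z' k - a k)^2 := by
        rw [normsq_eq]
        apply Finset.sum_congr rfl
        intro k _
        congr 1
      have n2 : ‖z - a‖^2 = ∑ k, (z k - a k)^2 := by
        rw [normsq_eq]
        apply Finset.sum_congr rfl
        intro k _
        congr 1
      rw [n1, n2]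
      nlinarith
    have hle : ‖z - a‖ ≤ ‖z' - a‖ := hz.2 z' ⟨hz'C, hz'Ω⟩
    have : ‖z - a‖^2 ≤ ‖z' - a‖^2 := pow_le_pow_left₀ (norm_nonneg _) hle 2
    linarith
end
end

section
/- Let f : ℝ^n → ℝ be differentiable with L_f-Lipschitz gradient, S ⊆ ℝ^n a closed set, and x* a global minimizer of f over S. Then for every t ∈ (0, 1/L_f), x* is the unique minimizer of ‖x - (x* - t∇f(x*))‖² over x ∈ S. In particular, if x̃ ∈ S satisfies ‖x̃ - (x* - t∇f(x*))‖ ≤ ‖x* - (x* - t∇f(x*))‖ and x̃ ≠ x*, then f(x̃) < f(x*), a contradiction. -/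
open scoped RealInnerProductSpace

noncomputable section

lemma descent_lemma {n : ℕ} (f : E n → ℝ) (g : E n → E n) (L : ℝ)
    (hgrad : ∀ x, HasGradientAt f (g x) x)
    (hlip : ∀ x y : E n, ‖g x - g y‖ ≤ L * ‖x - y‖) (x y : E n) :
    f y ≤ f x + ⟪g x, y - x⟫ + L / 2 * ‖y - x‖ ^ 2 := by
  set v := y - x with hv
  set c : ℝ → E n := fun s => x + s • v with hc
  set h : ℝ → ℝ := fun s => f (c s) - s * ⟪g x, v⟫ - L / 2 * s ^ 2 * ‖v‖ ^ 2 with hh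
  have hcd : ∀ s : ℝ, HasDerivAt c v s := by
    intro s
    have h1 : HasDerivAt (fun s : ℝ => s • v) ((1:ℝ) • v) s :=
      (hasDerivAt_id s).smul_const v
    have h2 := h1.const_add x
    simpa [hc] using h2
  have hhd : ∀ s : ℝ,
      HasDerivAt h (⟪g (c s), v⟫ - ⟪g x, v⟫ - L / 2 * (2 * s) * ‖v‖ ^ 2) s := by
    intro s
    have h1 : HasDerivAt (fun s => f (c s)) (⟪g (c s), v⟫) s := by
      have := ((hgrad (c s)).hasFDerivAt).comp_hasDerivAt s (hcd s)
      simp at this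
      exact this
    have h2 : HasDerivAt (fun s : ℝ => s * ⟪g x, v⟫) (⟪g x, v⟫) s := by
      simpa using (hasDerivAt_id s).mul_const (⟪g x, v⟫)
    have h3 : HasDerivAt (fun s : ℝ => L / 2 * s ^ 2 * ‖v‖ ^ 2)
        (L / 2 * (2 * s) * ‖v‖ ^ 2) s := by
      have := ((hasDerivAt_pow 2 s).const_mul (L / 2)).mul_const (‖v‖ ^ 2)
      simpa [mul_comm, mul_assoc, mul_left_comm] using this
    exact (h1.sub h2).sub h3
  have key : h 1 ≤ h 0 := by
    have hanti : AntitoneOn h (Set.Icc (0 : ℝ) 1) := by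
      apply antitoneOn_of_deriv_nonpos (convex_Icc 0 1)
      · exact fun s _ => ((hhd s).continuousAt).continuousWithinAt
      · exact fun s _ => ((hhd s).differentiableAt).differentiableWithinAt
      · intro s hs
        rw [interior_Icc] at hs
        rw [(hhd s).deriv]
        have hb : ⟪g (c s), v⟫ - ⟪g x, v⟫ ≤ L * s * ‖v‖ ^ 2 := by
          have h1 : ⟪g (c s), v⟫ - ⟪g x, v⟫ = ⟪g (c s) - g x, v⟫ := by
            rw [inner_sub_left]
          rw [h1]
          calc ⟪g (c s) - g x, v⟫ ≤ ‖g (c s) - g x‖ * ‖v‖ := real_inner_le_norm _ _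
            _ ≤ L * ‖c s - x‖ * ‖v‖ := by
                have := hlip (c s) x
                have hvn : (0:ℝ) ≤ ‖v‖ := norm_nonneg _
                nlinarith [norm_nonneg (g (c s) - g x)]
            _ = L * s * ‖v‖ ^ 2 := by
                have : ‖c s - x‖ = s * ‖v‖ := by
                  simp [hc, norm_smul, abs_of_pos hs.1]
                rw [this]; ring
        nlinarith
    exact hanti (by norm_num) (by norm_num) (by norm_num)
  simp only [hh, hc] at key
  simp only [one_smul, zero_smul, add_zero, one_pow, one_mul] at key
  have : x + v = y := by rw [hv]; abel
  rw [this] at key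
  linarith

theorem stmt8 {n : ℕ} (f : E n → ℝ) (g : E n → E n) (L : ℝ) (hL : 0 < L)
    (hgrad : ∀ x, HasGradientAt f (g x) x)
    (hlip : ∀ x y : E n, ‖g x - g y‖ ≤ L * ‖x - y‖)
    (S : Set (E n)) (hS : IsClosed S)
    (xs : E n) (hxs : xs ∈ S) (hmin : ∀ z ∈ S, f xs ≤ f z)
    (t : ℝ) (ht : 0 < t) (ht' : t < 1 / L) :
    (∀ x ∈ S, ‖xs - (xs - t • g xs)‖ ≤ ‖x - (xs - t • g xs)‖) ∧
    (∀ x ∈ S, ‖x - (xs - t • g xs)‖ ≤ ‖xs - (xs - t • g xs)‖ → x = xs) := by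
  have hLt : L * t < 1 := by
    rw [lt_div_iff₀ hL] at ht'; linarith
  have key : ∀ x ∈ S, ‖x - (xs - t • g xs)‖ ≤ ‖xs - (xs - t • g xs)‖ → x = xs := by
    intro x hx hle
    by_contra hne
    have hN : 0 < ‖x - xs‖ ^ 2 := by
      have h0 : x - xs ≠ 0 := sub_ne_zero.mpr hne
      exact pow_pos (norm_pos_iff.mpr h0) 2
    have hsq : ‖x - (xs - t • g xs)‖ ^ 2 ≤ ‖xs - (xs - t • g xs)‖ ^ 2 :=
      pow_le_pow_left₀ (norm_nonneg _) hle 2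
    have he1 : x - (xs - t • g xs) = (x - xs) + t • g xs := by abel
    have he2 : xs - (xs - t • g xs) = t • g xs := by abel
    rw [he1, he2, norm_add_sq_real] at hsq
    have hinner : 2 * t * ⟪g xs, x - xs⟫ ≤ -‖x - xs‖ ^ 2 := by
      have : ⟪x - xs, t • g xs⟫ = t * ⟪g xs, x - xs⟫ := by
        rw [real_inner_smul_right, real_inner_comm]
      nlinarith [hsq, this]
    have hdesc := descent_lemma f g L hgrad hlip xs x
    have hfm := hmin x hx
    nlinarith [hdesc, hfm, hinner, hN, ht, hLt]
  refine ⟨?_, key⟩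
  intro x hx
  by_contra hlt
  push_neg at hlt
  have := key x hx hlt.le
  rw [this] at hlt
  exact lt_irrefl _ hlt
end
end

section
/- Let f : ℝ^n → ℝ be differentiable with L_f-Lipschitz gradient, S ⊆ ℝ^n closed, t ∈ (0, 1/L_f), and x* ∈ S. If w ∈ S minimizes ‖z - (x* - t∇f(x*))‖² over z ∈ S and w ≠ x*, then f(w) < f(x*). -/
open scoped RealInnerProductSpace

noncomputable section

lemma descent {n : ℕ} (f : E n → ℝ) (g : E n → E n) (L : ℝ) (hL : 0 < L)
    (hgrad : ∀ x, HasGradientAt f (g x) x)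
    (hlip : ∀ x y : E n, ‖g x - g y‖ ≤ L * ‖x - y‖) (x y : E n) :
    f y ≤ f x + ⟪g x, y - x⟫ + L / 2 * ‖y - x‖ ^ 2 := by
  set c : ℝ → E n := fun s => x + s • (y - x) with hc
  have hcont : Continuous g := by
    have : LipschitzWith L.toNNReal g :=
      LipschitzWith.of_dist_le_mul (fun a b => by
        simpa [dist_eq_norm, Real.coe_toNNReal L hL.le] using hlip a b)
    exact this.continuous
  have hderiv : ∀ s : ℝ, HasDerivAt (fun s => f (c s)) ⟪g (c s), y - x⟫ s := by
    intro s
    have h1 : HasDerivAt c (y - x) s := by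
      have h := ((hasDerivAt_id s).smul_const (y - x)).const_add x; rw [one_smul] at h; exact h
    have h2 := ((hgrad (c s)).hasFDerivAt).comp_hasDerivAt s h1
    simp [InnerProductSpace.toDual_apply_apply] at h2; exact h2
  have hcontφ : Continuous fun s : ℝ => ⟪g (c s), y - x⟫ := by
    exact (hcont.comp (continuous_const.add (continuous_id.smul continuous_const))).inner continuous_const
  have hint : ∫ s in (0:ℝ)..1, ⟪g (c s), y - x⟫ = f (c 1) - f (c 0) :=
    intervalIntegral.integral_eq_sub_of_hasDerivAt (fun s _ => hderiv s)
      (hcontφ.intervalIntegrable 0 1)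
  have hc0 : c 0 = x := by simp [hc]
  have hc1 : c 1 = y := by simp [hc]
  have hbound : ∀ s ∈ Set.Icc (0:ℝ) 1,
      ⟪g (c s), y - x⟫ ≤ ⟪g x, y - x⟫ + L * s * ‖y - x‖ ^ 2 := by
    intro s hs
    have h1 : ⟪g (c s) - g x, y - x⟫ ≤ ‖g (c s) - g x‖ * ‖y - x‖ :=
      real_inner_le_norm _ _
    have h2 : ‖g (c s) - g x‖ ≤ L * (s * ‖y - x‖) := by
      have := hlip (c s) x
      simpa [hc, norm_smul, abs_of_nonneg hs.1] using this
    have h3 : ‖g (c s) - g x‖ * ‖y - x‖ ≤ L * (s * ‖y - x‖) * ‖y - x‖ :=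
      mul_le_mul_of_nonneg_right h2 (norm_nonneg _)
    have h4 : ⟪g (c s) - g x, y - x⟫ = ⟪g (c s), y - x⟫ - ⟪g x, y - x⟫ :=
      inner_sub_left _ _ _
    nlinarith [sq_nonneg (‖y - x‖)]
  have hintle : ∫ s in (0:ℝ)..1, ⟪g (c s), y - x⟫ ≤
      ∫ s in (0:ℝ)..1, (⟪g x, y - x⟫ + L * s * ‖y - x‖ ^ 2) := by
    apply intervalIntegral.integral_mono_on (by norm_num)
      (hcontφ.intervalIntegrable 0 1)
      ((by fun_prop : Continuous fun s : ℝ => ⟪g x, y - x⟫ + L * s * ‖y - x‖ ^ 2).intervalIntegrable 0 1)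
    exact hbound
  have hrhs : ∫ s in (0:ℝ)..1, (⟪g x, y - x⟫ + L * s * ‖y - x‖ ^ 2) =
      ⟪g x, y - x⟫ + L / 2 * ‖y - x‖ ^ 2 := by
    rw [intervalIntegral.integral_add (intervalIntegrable_const)
      ((by fun_prop : Continuous fun s : ℝ => L * s * ‖y - x‖ ^ 2).intervalIntegrable 0 1)]
    simp [intervalIntegral.integral_const, mul_assoc,
      intervalIntegral.integral_const_mul, integral_id]
    ring
  rw [hint, hc0, hc1] at hintle
  linarith [hintle, hrhs ▸ hintle]

theorem stmt10 {n : ℕ} (f : E n → ℝ) (g : E n → E n) (L : ℝ) (hL : 0 < L)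
    (hgrad : ∀ x, HasGradientAt f (g x) x)
    (hlip : ∀ x y : E n, ‖g x - g y‖ ≤ L * ‖x - y‖)
    (S : Set (E n)) (hS : IsClosed S)
    (t : ℝ) (ht : 0 < t) (ht' : t < 1 / L)
    (xs : E n) (hxs : xs ∈ S)
    (w : E n) (hw : w ∈ S)
    (hwmin : ∀ z ∈ S, ‖w - (xs - t • g xs)‖ ≤ ‖z - (xs - t • g xs)‖)
    (hne : w ≠ xs) :
    f w < f xs := by
  have hd : f w ≤ f xs + ⟪g xs, w - xs⟫ + L / 2 * ‖w - xs‖ ^ 2 :=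
    descent f g L hL hgrad hlip xs w
  have key := hwmin xs hxs
  have heq : w - (xs - t • g xs) = (w - xs) + t • g xs := by abel
  have heq2 : xs - (xs - t • g xs) = t • g xs := by abel
  rw [heq, heq2] at key
  have hsq : ‖(w - xs) + t • g xs‖ ^ 2 ≤ ‖t • g xs‖ ^ 2 :=
    pow_le_pow_left₀ (norm_nonneg _) key 2
  rw [norm_add_sq_real] at hsq
  have hip : ⟪w - xs, t • g xs⟫ = t * ⟪g xs, w - xs⟫ := by
    rw [real_inner_smul_right, real_inner_comm]
  have hpos : 0 < ‖w - xs‖ ^ 2 := by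
    have : w - xs ≠ 0 := sub_ne_zero.mpr hne
    exact pow_pos (norm_pos_iff.mpr this) 2
  have hLt : L * t < 1 := by
    rw [lt_div_iff₀ hL] at ht'; linarith
  nlinarith [hsq, hip, hd, hpos, hLt, ht, mul_pos ht hpos]
end
end

section
/- Let B = X₁ × ⋯ × Xₙ ⊆ ℝ^n be a product of closed intervals Xᵢ ⊆ ℝ, s ∈ {1,...,n-1}, and x ∈ B with ‖x‖₀ < s. If v ∈ ℝ^n satisfies v_T ∈ N_{B_T}(x_T) for every index set T ⊇ supp(x) with |T| = s, then v ∈ N_B(x), where N denotes the normal cone of a convex set. -/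
open scoped RealInnerProductSpace

noncomputable section

/-! The normal cone of a box is the product of the normal cones of its factors, so it suffices to
test `v` against the vectors that differ from `x` in a single coordinate `i`. Such a vector is
supported in `insert i (spt x)`, which has at most `s` elements because `‖x‖₀ < s`, hence lies in
some `s`-set `T ⊇ spt x`, where the hypothesis applies. -/

section BoxNormalCone

variable {ι : Type*}

theorem inner_sub_nonpos_of_forall_coord [Fintype ι] {X : ι → Set ℝ} {x v : EuclideanSpace ℝ ι}
    (hv : ∀ i, ∀ t ∈ X i, v i * (t - x i) ≤ 0) {y : EuclideanSpace ℝ ι} (hy : ∀ i, y i ∈ X i) :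
    ⟪v, y - x⟫ ≤ 0 := by
  rw [PiLp.inner_apply]
  refine Finset.sum_nonpos fun i _ => ?_
  simpa [mul_comm] using hv i (y i) (hy i)

variable [DecidableEq ι]

theorem add_single_sub_apply (x : EuclideanSpace ℝ ι) (i j : ι) (t : ℝ) :
    (x + EuclideanSpace.single i (t - x i)) j = if j = i then t else x j := by
  split_ifs with h <;> simp [h]

theorem inner_add_single_sub [Fintype ι] (v x : EuclideanSpace ℝ ι) (i : ι) (t : ℝ) :
    ⟪v, x + EuclideanSpace.single i (t - x i) - x⟫ = v i * (t - x i) := by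
  rw [add_sub_cancel_left, EuclideanSpace.inner_single_right, conj_trivial, mul_comm]

end BoxNormalCone

theorem apply_eq_zero_of_notMem_spt {n : ℕ} {x : E n} {j : Fin n} (hj : j ∉ spt x) : x j = 0 := by
  simpa [spt] using hj

theorem stmt11_general {n s : ℕ} (X : Fin n → Set ℝ)
    (hs2 : s < n)
    (x : E n) (hx : ∀ i, x i ∈ X i) (hcard : (spt x).card < s)
    (v : E n)
    (hv : ∀ T : Finset (Fin n), spt x ⊆ T → T.card = s →
      ∀ y : E n, (∀ i, y i ∈ X i) → (∀ i ∉ T, y i = 0) → ⟪v, y - x⟫ ≤ 0) :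
    ∀ y : E n, (∀ i, y i ∈ X i) → ⟪v, y - x⟫ ≤ 0 := by
  intro y hy
  refine inner_sub_nonpos_of_forall_coord (fun i t ht => ?_) hy
  obtain ⟨T, hST, hT⟩ := Finset.exists_superset_card_eq
    ((Finset.card_insert_le i (spt x)).trans hcard) (by simpa using hs2.le)
  rw [← inner_add_single_sub]
  refine hv T ((Finset.subset_insert i _).trans hST) hT _ (fun j => ?_) (fun j hj => ?_)
  · rw [add_single_sub_apply]
    split_ifs with hji
    · exact hji ▸ ht
    · exact hx j
  · have hj' : j ∉ insert i (spt x) := fun h => hj (hST h)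
    rw [Finset.mem_insert, not_or] at hj'
    rw [add_single_sub_apply, if_neg hj'.1, apply_eq_zero_of_notMem_spt hj'.2]

theorem stmt11 {n s : ℕ} (X : Fin n → Set ℝ)
    (hXcl : ∀ i, IsClosed (X i)) (hXconv : ∀ i, Convex ℝ (X i))
    (hX0 : ∀ i, (0 : ℝ) ∈ X i)
    (hs1 : 1 ≤ s) (hs2 : s < n)
    (x : E n) (hx : ∀ i, x i ∈ X i) (hcard : (spt x).card < s)
    (v : E n)
    (hv : ∀ T : Finset (Fin n), spt x ⊆ T → T.card = s →
      ∀ y : E n, (∀ i, y i ∈ X i) → (∀ i ∉ T, y i = 0) → ⟪v, y - x⟫ ≤ 0) :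
    ∀ y : E n, (∀ i, y i ∈ X i) → ⟪v, y - x⟫ ≤ 0 :=
  stmt11_general X hs2 x hx hcard v hv
end
end

section
/- Let Δ₊ = {x ∈ ℝ^n : Σᵢ xᵢ = 1, x ≥ 0} be the simplex, s ∈ {1,...,n-1}, and x ∈ Δ₊ with ‖x‖₀ < s. If v ∈ ℝ^n satisfies v_T ∈ N_{(Δ₊)_T}(x_T) for every index set T ⊇ supp(x) with |T| = s, then v ∈ N_{Δ₊}(x). -/
open scoped RealInnerProductSpace

noncomputable section

theorem stmt13 {n s : ℕ} (hs1 : 1 ≤ s) (hs2 : s < n)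
    (x : E n) (hx0 : ∀ i, 0 ≤ x i) (hx1 : ∑ i, x i = 1)
    (hcard : (spt x).card < s)
    (v : E n)
    (hv : ∀ T : Finset (Fin n), spt x ⊆ T → T.card = s →
      ∀ y : E n, (∀ i, 0 ≤ y i) → (∀ i ∉ T, y i = 0) → (∑ i, y i) = 1 →
        ⟪v, y - x⟫ ≤ 0) :
    ∀ y : E n, (∀ i, 0 ≤ y i) → (∑ i, y i) = 1 → ⟪v, y - x⟫ ≤ 0 := by
  have hinner : ∀ y : E n, ⟪v, y - x⟫ = ∑ i, v i * (y i - x i) := by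
    intro y
    rw [PiLp.inner_apply]
    apply Finset.sum_congr rfl
    intro i _
    simp [RCLike.inner_apply, conj_trivial]
    ring
  set c : ℝ := ∑ i, v i * x i with hc
  have key : ∀ j : Fin n, v j ≤ c := by
    intro j
    have hcard2 : (spt x ∪ {j}).card ≤ s := by
      calc (spt x ∪ {j}).card ≤ (spt x).card + ({j} : Finset (Fin n)).card :=
            Finset.card_union_le _ _
        _ ≤ (s - 1) + 1 := by
            simp only [Finset.card_singleton]
            omega
        _ ≤ s := by omega
    obtain ⟨T, hTsub, hTcard⟩ := Finset.exists_superset_card_eq hcard2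
      (by simpa using hs2.le)
    have hjT : j ∈ T := hTsub (Finset.mem_union_right _ (Finset.mem_singleton_self j))
    have hsptT : spt x ⊆ T := (Finset.subset_union_left).trans hTsub
    let y : E n := WithLp.toLp 2 (fun i => if i = j then (1 : ℝ) else 0)
    have hy : ∀ i, y i = if i = j then (1 : ℝ) else 0 := fun i => rfl
    have h0 : ∀ i, 0 ≤ y i := by intro i; rw [hy]; split <;> norm_num
    have hsupp : ∀ i ∉ T, y i = 0 := by
      intro i hi
      rw [hy]
      split
      · next h => exact absurd (h ▸ hjT) hi
      · rfl
    have hsum : ∑ i, y i = 1 := by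
      simp only [hy]
      simp
    have := hv T hsptT hTcard y h0 hsupp hsum
    rw [hinner] at this
    have heq : ∑ i, v i * (y i - x i) = v j - c := by
      rw [hc]
      rw [show ∑ i, v i * (y i - x i) = ∑ i, (v i * y i - v i * x i) by
        apply Finset.sum_congr rfl; intro i _; ring]
      rw [Finset.sum_sub_distrib]
      congr 1
      rw [show v j = ∑ i, if i = j then v i else 0 by simp]
      apply Finset.sum_congr rfl
      intro i _
      rw [hy]
      by_cases h : i = j <;> simp [h]
    rw [heq] at this
    linarith
  intro y hy0 hy1
  rw [hinner]
  have : ∑ i, v i * (y i - x i) ≤ ∑ i, c * (y i - x i) := by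
    rw [show ∑ i, v i * (y i - x i) = ∑ i, (v i * y i - v i * x i) by
      apply Finset.sum_congr rfl; intro i _; ring]
    rw [show ∑ i, c * (y i - x i) = ∑ i, (c * y i - v i * x i) by
      rw [show ∑ i, c * (y i - x i) = ∑ i, (c * y i - c * x i) by
        apply Finset.sum_congr rfl; intro i _; ring]
      rw [Finset.sum_sub_distrib, Finset.sum_sub_distrib]
      congr 1
      rw [← Finset.mul_sum, hx1, mul_one, hc]]
    apply Finset.sum_le_sum
    intro i _
    have := mul_le_mul_of_nonneg_right (key i) (hy0 i)
    linarith
  calc ∑ i, v i * (y i - x i) ≤ ∑ i, c * (y i - x i) := this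
    _ = c * (∑ i, y i - ∑ i, x i) := by
        rw [← Finset.mul_sum, Finset.sum_sub_distrib]
    _ = 0 := by rw [hy1, hx1]; ring
end
end

section
/- Let Ω ⊆ ℝ^n be closed convex, f : ℝ^n → ℝ convex and differentiable, s ∈ {1,...,n-1}, and C_s = {x : ‖x‖₀ ≤ s}. Suppose x* ∈ C_s ∩ Ω with ‖x*‖₀ = s, and for some t > 0, x* is a minimizer of ‖x - (x* - t∇f(x*))‖² over C_s ∩ Ω. Then x* is a local minimizer of f over C_s ∩ Ω: there exists ε > 0 such that f(x) ≥ f(x*) for all x ∈ C_s ∩ Ω with ‖x - x*‖ < ε. -/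
open scoped RealInnerProductSpace

noncomputable section

/-- Coordinate bound in Euclidean space. -/
lemma abs_apply_le_norm' {n : ℕ} (v : E n) (i : Fin n) : |v i| ≤ ‖v‖ := by
  rw [EuclideanSpace.norm_eq]
  refine le_trans ?_ (Real.sqrt_le_sqrt (Finset.single_le_sum (f := fun j => ‖v j‖^2)
    (fun j _ => sq_nonneg _) (Finset.mem_univ i)))
  rw [Real.sqrt_sq_eq_abs]
  simp [abs_abs, Real.norm_eq_abs]

/-- First-order condition for convex differentiable functions. -/
lemma first_order {n : ℕ} (f : E n → ℝ) (hf : ConvexOn ℝ Set.univ f) (x G : E n)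
    (hg : HasGradientAt f G x) (y : E n) : f x + ⟪G, y - x⟫ ≤ f y := by
  set d := y - x with hd
  have hline : ∀ τ : ℝ, x + τ • d = AffineMap.lineMap x y τ := by
    intro τ; simp [AffineMap.lineMap_apply, hd]; module
  have hφc : ConvexOn ℝ Set.univ (f ∘ (AffineMap.lineMap x y : ℝ →ᵃ[ℝ] E n)) := by
    have := hf.comp_affineMap (AffineMap.lineMap x y : ℝ →ᵃ[ℝ] E n)
    simpa using this
  have hderiv : HasDerivAt (fun τ : ℝ => f (AffineMap.lineMap x y τ)) ⟪G, d⟫ 0 := by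
    have h1 : HasDerivAt (fun τ : ℝ => AffineMap.lineMap x y τ) d 0 := by
      simp_rw [← hline]
      have : HasDerivAt (fun τ : ℝ => τ • d) ((1:ℝ) • d) 0 := (hasDerivAt_id 0).smul_const d
      simpa using (this.const_add x)
    have hx0 : (AffineMap.lineMap x y : ℝ →ᵃ[ℝ] E n) 0 = x := by simp
    have hfd : HasFDerivAt f ((InnerProductSpace.toDual ℝ (E n)) G)
        ((AffineMap.lineMap x y : ℝ →ᵃ[ℝ] E n) (0:ℝ)) := by
      rw [hx0]; exact hg.hasFDerivAt
    have h2 := hfd.comp_hasDerivAt 0 h1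
    exact h2
  have := hφc.le_slope_of_hasDerivAt (Set.mem_univ (0:ℝ)) (Set.mem_univ (1:ℝ)) one_pos hderiv
  rw [slope_def_field] at this
  simp only [Function.comp_apply, AffineMap.lineMap_apply_zero, AffineMap.lineMap_apply_one,
    sub_zero, div_one] at this
  linarith

theorem stmt15 {n s : ℕ} (Ω : Set (E n)) (hcl : IsClosed Ω) (hconv : Convex ℝ Ω)
    (f : E n → ℝ) (hf : ConvexOn ℝ Set.univ f)
    (g : E n → E n) (hgrad : ∀ x, HasGradientAt f (g x) x)
    (hs1 : 1 ≤ s) (hs2 : s < n)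
    (xs : E n) (hxs : xs ∈ Cs n s ∩ Ω) (hcard : (spt xs).card = s)
    (t : ℝ) (ht : 0 < t)
    (hmin : ∀ z ∈ Cs n s ∩ Ω,
      ‖xs - (xs - t • g xs)‖ ≤ ‖z - (xs - t • g xs)‖) :
    ∃ ε > 0, ∀ x ∈ Cs n s ∩ Ω, ‖x - xs‖ < ε → f xs ≤ f x := by
  classical
  -- the restricted set
  set K : Set (E n) := {z ∈ Ω | ∀ i, xs i = 0 → z i = 0} with hK
  have hKconv : Convex ℝ K := by
    intro z hz w hw a b ha hb hab
    refine ⟨hconv hz.1 hw.1 ha hb hab, fun i hi => ?_⟩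
    have h1 := hz.2 i hi
    have h2 := hw.2 i hi
    simp [h1, h2]
  have hKsub : K ⊆ Cs n s ∩ Ω := by
    intro z hz
    refine ⟨?_, hz.1⟩
    have hsub : spt z ⊆ spt xs := by
      intro i hi
      simp only [spt, Finset.mem_filter, Finset.mem_univ, true_and] at hi ⊢
      intro h0
      exact hi (hz.2 i h0)
    calc (spt z).card ≤ (spt xs).card := Finset.card_le_card hsub
      _ = s := hcard
  have hxsK : xs ∈ K := ⟨hxs.2, fun i h => h⟩
  -- variational inequality
  set u : E n := xs - t • g xs with hu
  have hVI : ∀ w ∈ K, ⟪u - xs, w - xs⟫ ≤ 0 := by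
    haveI : Nonempty K := ⟨⟨xs, hxsK⟩⟩
    have hinf : ‖u - xs‖ = ⨅ w : K, ‖u - w‖ := by
      refine le_antisymm ?_ ?_
      · refine le_ciInf fun w => ?_
        rw [norm_sub_rev, norm_sub_rev u w]
        exact hmin w (hKsub w.2)
      · refine ciInf_le_of_le ⟨0, fun r hr => ?_⟩ ⟨xs, hxsK⟩ le_rfl
        obtain ⟨w, rfl⟩ := hr
        exact norm_nonneg _
    exact (norm_eq_iInf_iff_real_inner_le_zero hKconv hxsK).mp hinf
  have hVI' : ∀ w ∈ K, 0 ≤ ⟪g xs, w - xs⟫ := by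
    intro w hw
    have := hVI w hw
    have hux : u - xs = -(t • g xs) := by rw [hu]; abel
    rw [hux, inner_neg_left, real_inner_smul_left] at this
    nlinarith [this]
  -- choose ε
  have hne : (spt xs).Nonempty := by
    rw [← Finset.card_pos, hcard]; omega
  set ε : ℝ := (spt xs).inf' hne (fun i => |xs i|) with hε
  have hεpos : 0 < ε := by
    rw [hε, Finset.lt_inf'_iff]
    intro i hi
    simp only [spt, Finset.mem_filter, Finset.mem_univ, true_and] at hi
    exact abs_pos.mpr hi
  refine ⟨ε, hεpos, fun x hx hclose => ?_⟩
  -- x ∈ K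
  have hxK : x ∈ K := by
    refine ⟨hx.2, fun i h0 => ?_⟩
    have hsub : spt xs ⊆ spt x := by
      intro i hi
      have hεle : ε ≤ |xs i| := Finset.inf'_le _ hi
      simp only [spt, Finset.mem_filter, Finset.mem_univ, true_and] at hi ⊢
      intro hxi
      have hb : |x i - xs i| ≤ ‖x - xs‖ := by
        have := abs_apply_le_norm' (x - xs) i
        simpa using this
      rw [hxi] at hb
      simp only [zero_sub, abs_neg] at hb
      linarith
    have heq : spt x = spt xs := by
      refine Finset.eq_of_subset_of_card_le hsub ?_ |>.symm
      rw [hcard]; exact hx.1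
    by_contra hxi
    have : i ∈ spt x := by
      simp only [spt, Finset.mem_filter, Finset.mem_univ, true_and]; exact hxi
    rw [heq] at this
    simp only [spt, Finset.mem_filter, Finset.mem_univ, true_and] at this
    exact this h0
  have := first_order f hf xs (g xs) (hgrad xs) x
  have h2 := hVI' x hxK
  linarith
end
end

section
/- Let Ω ⊆ ℝ^n be closed convex, f : ℝ^n → ℝ differentiable, s ∈ {1,...,n-1}, and x* ∈ ℝ^n with ‖x*‖₀ = s and 0 < s < n. Suppose x* is a minimizer of ‖x - (x* - t₁∇f(x*))‖² over C_s ∩ Ω for some t₁ > 0, and that for some t₂ > 0 every coordinate of x* - t₂∇f(x*) indexed by supp(x*) is ≥ every coordinate indexed by the complement of supp(x*) (assuming Ω is nonnegative symmetric, so no absolute values are needed). Then x* is a minimizer of ‖x - (x* - t₂∇f(x*))‖² over C_s ∩ Ω. -/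
open scoped RealInnerProductSpace

noncomputable section

/-- Variational characterization of projections onto convex sets. -/
lemma proj_iff' {n : ℕ} {K : Set (E n)} (hK : Convex ℝ K) {u v : E n} (hv : v ∈ K) :
    (∀ w ∈ K, ‖v - u‖ ≤ ‖w - u‖) ↔ ∀ w ∈ K, ⟪u - v, w - v⟫ ≤ 0 := by
  have hbdd : BddBelow (Set.range fun w : K => ‖u - (w : E n)‖) :=
    ⟨0, by rintro x ⟨w, rfl⟩; exact norm_nonneg _⟩
  haveI : Nonempty K := ⟨⟨v, hv⟩⟩
  rw [← norm_eq_iInf_iff_real_inner_le_zero hK hv]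
  constructor
  · intro hmin
    refine le_antisymm (le_ciInf fun w => ?_) (ciInf_le hbdd ⟨v, hv⟩)
    rw [norm_sub_rev u v, norm_sub_rev u w]
    exact hmin w w.2
  · intro heq w hw
    calc ‖v - u‖ = ‖u - v‖ := norm_sub_rev _ _
      _ ≤ ‖u - w‖ := heq ▸ ciInf_le hbdd ⟨w, hw⟩
      _ = ‖w - u‖ := norm_sub_rev _ _

lemma not_mem_spt {n : ℕ} {x : E n} {i : Fin n} : i ∉ spt x ↔ x i = 0 := by
  simp [spt]

theorem stmt16 {n s : ℕ} (Ω : Set (E n)) (hcl : IsClosed Ω) (hnn : IsNonnegSymmSet Ω)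
    (hconv : Convex ℝ Ω)
    (f : E n → ℝ) (g : E n → E n) (hgrad : ∀ x, HasGradientAt f (g x) x)
    (hs1 : 0 < s) (hs2 : s < n)
    (xs : E n) (hcard : (spt xs).card = s)
    (t1 : ℝ) (ht1 : 0 < t1)
    (h1 : IsProj (Cs n s ∩ Ω) (xs - t1 • g xs) xs)
    (t2 : ℝ) (ht2 : 0 < t2)
    (h2 : ∀ i ∈ spt xs, ∀ j ∉ spt xs,
      (xs - t2 • g xs) j ≤ (xs - t2 • g xs) i) :
    IsProj (Cs n s ∩ Ω) (xs - t2 • g xs) xs := by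
  set y2 : E n := xs - t2 • g xs with hy2
  set K : Set (E n) := {x | x ∈ Ω ∧ ∀ i, i ∉ spt xs → x i = 0} with hK
  have hKconv : Convex ℝ K := by
    intro x hx y hy a b ha hb hab
    refine ⟨hconv hx.1 hy.1 ha hb hab, fun i hi => ?_⟩
    have : (a • x + b • y) i = a * x i + b * y i := by
      simp [PiLp.add_apply, PiLp.smul_apply, smul_eq_mul]
    rw [this, hx.2 i hi, hy.2 i hi]; ring
  have hxsK : xs ∈ K := ⟨h1.1.2, fun i hi => not_mem_spt.mp hi⟩
  have hKsub : K ⊆ Cs n s ∩ Ω := by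
    intro x hx
    refine ⟨?_, hx.1⟩
    have hsub : spt x ⊆ spt xs := by
      intro i hi
      by_contra hc
      exact (not_mem_spt.mpr (hx.2 i hc)) hi
    exact le_trans (Finset.card_le_card hsub) (le_of_eq hcard)
  -- variational inequality from h1
  have step1 : ∀ w ∈ K, ⟪(xs - t1 • g xs) - xs, w - xs⟫ ≤ 0 :=
    (proj_iff' hKconv hxsK).mp (fun w hw => h1.2 w (hKsub hw))
  have step2 : ∀ w ∈ K, ⟪y2 - xs, w - xs⟫ ≤ 0 := by
    intro w hw
    have hrw : y2 - xs = (t2 / t1) • ((xs - t1 • g xs) - xs) := by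
      rw [hy2]
      have : xs - t2 • g xs - xs = -(t2 • g xs) := by abel
      rw [this]
      have : xs - t1 • g xs - xs = -(t1 • g xs) := by abel
      rw [this, smul_neg, smul_smul, div_mul_cancel₀ _ ht1.ne']
    rw [hrw, real_inner_smul_left]
    exact mul_nonpos_of_nonneg_of_nonpos (div_nonneg ht2.le ht1.le) (step1 w hw)
  have step3 : ∀ w ∈ K, ‖xs - y2‖ ≤ ‖w - y2‖ :=
    (proj_iff' hKconv hxsK).mpr step2
  refine ⟨h1.1, ?_⟩
  rintro z ⟨hzC, hzΩ⟩
  -- build the permutation moving supp(z) into supp(xs)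
  set A : Finset (Fin n) := spt z \ spt xs with hA
  set B : Finset (Fin n) := spt xs \ spt z with hB
  have hABcard : A.card ≤ B.card := by
    have h1' := Finset.card_sdiff_add_card_inter (spt z) (spt xs)
    have h2' := Finset.card_sdiff_add_card_inter (spt xs) (spt z)
    have h3' : (spt z ∩ spt xs).card = (spt xs ∩ spt z).card := by
      rw [Finset.inter_comm]
    have hzc : (spt z).card ≤ s := hzC
    rw [hA, hB]; omega
  obtain ⟨B₀, hB₀B, hB₀card⟩ := Finset.exists_subset_card_eq hABcard
  have e : (A : Finset (Fin n)) ≃ (B₀ : Finset (Fin n)) :=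
    Finset.equivOfCardEq hB₀card.symm
  have hAnotxs : ∀ i ∈ A, i ∉ spt xs := fun i hi => (Finset.mem_sdiff.mp hi).2
  have hAz : ∀ i ∈ A, i ∈ spt z := fun i hi => (Finset.mem_sdiff.mp hi).1
  have hB₀xs : ∀ i ∈ B₀, i ∈ spt xs := fun i hi => (Finset.mem_sdiff.mp (hB₀B hi)).1
  have hB₀notz : ∀ i ∈ B₀, i ∉ spt z := fun i hi => (Finset.mem_sdiff.mp (hB₀B hi)).2
  have hdisj : ∀ i, ¬(i ∈ A ∧ i ∈ B₀) := by
    rintro i ⟨h₁, h₂⟩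
    exact hAnotxs i h₁ (hB₀xs i h₂)
  classical
  set F : Fin n → Fin n :=
    fun i => if h : i ∈ A then (e ⟨i, h⟩ : Fin n)
      else if h : i ∈ B₀ then (e.symm ⟨i, h⟩ : Fin n) else i with hF
  have hFA : ∀ i (h : i ∈ A), F i = (e ⟨i, h⟩ : Fin n) := by
    intro i h; simp [hF, h]
  have hFB : ∀ i (h : i ∈ B₀), F i = (e.symm ⟨i, h⟩ : Fin n) := by
    intro i h
    have hnA : i ∉ A := fun hc => hdisj i ⟨hc, h⟩
    simp [hF, hnA, h]
  have hFfix : ∀ i, i ∉ A → i ∉ B₀ → F i = i := by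
    intro i h₁ h₂; simp [hF, h₁, h₂]
  have hFinv : Function.Involutive F := by
    intro i
    by_cases h : i ∈ A
    · rw [hFA i h]
      have hm : (e ⟨i, h⟩ : Fin n) ∈ B₀ := (e ⟨i, h⟩).2
      rw [hFB _ hm]
      have : (⟨(e ⟨i, h⟩ : Fin n), hm⟩ : {x // x ∈ B₀}) = e ⟨i, h⟩ := Subtype.ext rfl
      rw [this, Equiv.symm_apply_apply]
    · by_cases h' : i ∈ B₀
      · rw [hFB i h']
        have hm : (e.symm ⟨i, h'⟩ : Fin n) ∈ A := (e.symm ⟨i, h'⟩).2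
        rw [hFA _ hm]
        have : (⟨(e.symm ⟨i, h'⟩ : Fin n), hm⟩ : {x // x ∈ A}) = e.symm ⟨i, h'⟩ :=
          Subtype.ext rfl
        rw [this, Equiv.apply_symm_apply]
      · rw [hFfix i h h', hFfix i h h']
  set σ : Equiv.Perm (Fin n) := hFinv.toPerm F with hσ
  have hσapp : ∀ i, σ i = F i := fun i => rfl
  set z' : E n := WithLp.toLp 2 (fun i => z (σ i)) with hz'
  have hz'Ω : z' ∈ Ω := hnn.1 z hzΩ σ
  have hz'zero : ∀ i, i ∉ spt xs → z' i = 0 := by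
    intro i hi
    show z (σ i) = 0
    rw [hσapp]
    by_cases h : i ∈ A
    · rw [hFA i h]
      exact not_mem_spt.mp (hB₀notz _ (e ⟨i, h⟩).2)
    · have h' : i ∉ B₀ := fun hc => hi (hB₀xs i hc)
      rw [hFfix i h h']
      have : i ∉ spt z := by
        intro hc
        exact h (Finset.mem_sdiff.mpr ⟨hc, hi⟩)
      exact not_mem_spt.mp this
  have hz'K : z' ∈ K := ⟨hz'Ω, hz'zero⟩
  -- norm comparison : ‖z' - y2‖ ≤ ‖z - y2‖
  have hnormz : ‖z'‖ = ‖z‖ := by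
    rw [EuclideanSpace.norm_eq, EuclideanSpace.norm_eq]
    congr 1
    exact Equiv.sum_comp σ (fun i => ‖z i‖ ^ 2)
  have hinner : ⟪z, y2⟫ ≤ ⟪z', y2⟫ := by
    rw [PiLp.inner_apply, PiLp.inner_apply]
    simp only [RCLike.inner_apply, conj_trivial]
    have hre : ∑ i, z' i * y2 i = ∑ i, z i * y2 (σ i) := by
      refine (Fintype.sum_equiv σ (fun i => z i * y2 (σ i)) (fun i => z' i * y2 i) ?_).symm
      intro i
      show z i * y2 (σ i) = z (σ (σ i)) * y2 (σ i)
      rw [show σ (σ i) = i from hFinv i]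
    rw [show (∑ x, y2 x * z x) = ∑ x, z x * y2 x from Finset.sum_congr rfl fun i _ => mul_comm _ _,
      show (∑ x, y2 x * z' x) = ∑ x, z' x * y2 x from Finset.sum_congr rfl fun i _ => mul_comm _ _]
    rw [hre]
    apply Finset.sum_le_sum
    intro i _
    by_cases h : i ∈ A
    · have hzi : 0 ≤ z i := hnn.2 z hzΩ i
      have hy : y2 i ≤ y2 (σ i) := by
        have hmem : σ i ∈ spt xs := by
          rw [hσapp, hFA i h]; exact hB₀xs _ (e ⟨i, h⟩).2
        exact h2 (σ i) hmem i (hAnotxs i h)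
      exact mul_le_mul_of_nonneg_left hy hzi
    · by_cases h' : i ∈ B₀
      · have : z i = 0 := not_mem_spt.mp (hB₀notz i h')
        rw [this]; simp
      · rw [hσapp, hFfix i h h']
  have hle : ‖z' - y2‖ ≤ ‖z - y2‖ := by
    have hsq : ‖z' - y2‖ ^ 2 ≤ ‖z - y2‖ ^ 2 := by
      rw [norm_sub_sq_real z' y2, norm_sub_sq_real z y2, hnormz]
      linarith [hinner]
    nlinarith [norm_nonneg (z' - y2), norm_nonneg (z - y2), hsq]
  exact le_trans (step3 z' hz'K) hle
end
end

section
/- Let g : ℝ^n → ℝ be convex differentiable and monotone increasing on ℝ^n_+ (∇g ≥ 0 there) with g(0) < 0, and suppose [∇g(x)]_{supp(x)} ≠ 0 for every nonzero x ∈ ℝ^n_+. Let Q₊ = {x ∈ ℝ^n : g(x) ≤ 0, x ≥ 0}, s ∈ {1,...,n-1}, and x ∈ Q₊ with ‖x‖₀ < s. If v ∈ ℝ^n satisfies v_T ∈ N_{(Q₊)_T}(x_T) for every index set T ⊇ supp(x) with |T| = s, then v ∈ N_{Q₊}(x). -/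
/-!
A direction `d` at `x` that moves only coordinates in `supp x ∪ {i}` and keeps the zero
coordinates of `x` nonnegative is supported in some `T ⊇ supp x` with `|T| = s`, because
`‖x‖₀ < s ≤ n`. If moreover `g x < 0` or `⟪∇g x, d⟫ < 0`, small steps along `d` stay in
`(Q₊)_T`, so `⟪v, d⟫ ≤ 0`.

If `g x < 0`, the directions `c • eᵢ` show that `v ≤ 0` with `vᵢ = 0` on `supp x`, i.e. `v` is
normal to `ℝⁿ₊` at `x`. If `g x = 0`, then `x ≠ 0` and some `i₀ ∈ supp x` has `∇g(x)ᵢ₀ > 0`;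
compensating a step in coordinate `i` by a step in `i₀` gives
`vᵢ wᵢ ≤ (vᵢ₀ / ∇g(x)ᵢ₀) ∇g(x)ᵢ wᵢ` for `w = y - x`, and summing,
`⟪v, w⟫ ≤ (vᵢ₀ / ∇g(x)ᵢ₀) ⟪∇g x, w⟫ ≤ 0` by the gradient inequality.
-/

open scoped RealInnerProductSpace

noncomputable section

open Filter Topology

lemma HasDerivAt.eventually_lt_of_deriv_neg {φ : ℝ → ℝ} {φ' a : ℝ} (h : HasDerivAt φ φ' a)
    (hφ' : φ' < 0) : ∀ᶠ t in 𝓝[>] a, φ t < φ a := by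
  have hslope := (hasDerivWithinAt_iff_tendsto_slope' Set.self_notMem_Ioi).1 h.hasDerivWithinAt
  filter_upwards [hslope.eventually (eventually_lt_nhds hφ'), self_mem_nhdsWithin] with t hlt ht
  exact (slope_neg_iff_of_le (le_of_lt ht)).1 hlt

section Gradient

variable {F : Type*} [NormedAddCommGroup F] [InnerProductSpace ℝ F] [CompleteSpace F]
  {g : F → ℝ} {γ x : F}

lemma HasGradientAt.hasDerivAt_add_smul (h : HasGradientAt g γ x) (d : F) :
    HasDerivAt (fun t : ℝ => g (x + t • d)) ⟪γ, d⟫ 0 := by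
  simpa only [HasLineDerivAt, InnerProductSpace.toDual_apply_apply] using
    h.hasFDerivAt.hasLineDerivAt d

lemma ConvexOn.add_inner_gradient_le (hg : ConvexOn ℝ Set.univ g) (h : HasGradientAt g γ x)
    (y : F) : g x + ⟪γ, y - x⟫ ≤ g y := by
  have hline : ConvexOn ℝ Set.univ fun t : ℝ => g (x + t • (y - x)) := by
    simpa [Function.comp_def, AffineMap.lineMap_apply, add_comm] using
      hg.comp_affineMap (AffineMap.lineMap x y)
  have := hline.le_slope_of_hasDerivAt (Set.mem_univ 0) (Set.mem_univ 1) one_pos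
    (h.hasDerivAt_add_smul (y - x))
  simp only [slope, sub_zero, inv_one, one_smul, zero_smul, add_zero, add_sub_cancel,
    vsub_eq_sub] at this
  linarith

lemma HasGradientAt.eventually_add_smul_neg (h : HasGradientAt g γ x) (hx : g x ≤ 0) {d : F}
    (hd : g x < 0 ∨ ⟪γ, d⟫ < 0) : ∀ᶠ t in 𝓝[>] (0 : ℝ), g (x + t • d) < 0 := by
  have hφ := h.hasDerivAt_add_smul d
  rcases hd with hlt | hneg
  · exact nhdsWithin_le_nhds (hφ.continuousAt (Iio_mem_nhds (by simpa using hlt)))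
  · filter_upwards [hφ.eventually_lt_of_deriv_neg hneg] with t ht
    simpa using ht.trans_le (by simpa using hx)

end Gradient

lemma eventually_nonneg_add_mul {ι : Type*} [Finite ι] {x d : ι → ℝ} (hx : ∀ i, 0 ≤ x i)
    (hd : ∀ i, x i = 0 → 0 ≤ d i) : ∀ᶠ t in 𝓝[>] (0 : ℝ), ∀ i, 0 ≤ x i + t * d i := by
  refine eventually_all.2 fun i => ?_
  rcases (hx i).eq_or_lt with hxi | hxi
  · filter_upwards [self_mem_nhdsWithin] with t ht
    rw [← hxi, zero_add]
    exact mul_nonneg (le_of_lt ht) (hd i hxi.symm)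
  · have hlim : Tendsto (fun t : ℝ => x i + t * d i) (𝓝 0) (𝓝 (x i)) :=
      (continuous_const.add (continuous_id.mul continuous_const)).tendsto' 0 _ (by simp)
    exact nhdsWithin_le_nhds ((hlim.eventually (lt_mem_nhds hxi)).mono fun t ht => ht.le)

lemma EuclideanSpace.real_inner_eq_sum {ι : Type*} [Fintype ι] (a b : EuclideanSpace ℝ ι) :
    ⟪a, b⟫ = ∑ i, a i * b i := by
  simp [PiLp.inner_apply, mul_comm]

section Sparse

variable {n : ℕ} {g : E n → ℝ} {γ x v y : E n}

lemma inner_nonpos_of_feasible_dir {T : Finset (Fin n)} {d : E n} (h : HasGradientAt g γ x)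
    (hx : g x ≤ 0 ∧ ∀ i, 0 ≤ x i) (hxT : spt x ⊆ T)
    (hv : ∀ y : E n, (g y ≤ 0 ∧ ∀ i, 0 ≤ y i) → (∀ i ∉ T, y i = 0) → ⟪v, y - x⟫ ≤ 0)
    (hdT : ∀ i ∉ T, d i = 0) (hd : ∀ i, x i = 0 → 0 ≤ d i) (hdec : g x < 0 ∨ ⟪γ, d⟫ < 0) :
    ⟪v, d⟫ ≤ 0 := by
  obtain ⟨t, ⟨hgt, hnonneg⟩, ht⟩ :=
    ((h.eventually_add_smul_neg hx.1 hdec).and (eventually_nonneg_add_mul hx.2 hd)).and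
      self_mem_nhdsWithin |>.exists
  have hsparse : ∀ i ∉ T, (x + t • d) i = 0 := fun i hi => by
    have hxi : x i = 0 := by simpa [spt] using mt (@hxT i) hi
    simp [hxi, hdT i hi]
  have := hv (x + t • d) ⟨hgt.le, by simpa using hnonneg⟩ hsparse
  rw [add_sub_cancel_left, real_inner_smul_right] at this
  exact nonpos_of_mul_nonpos_right this ht

def IsAdmissibleDir (x : E n) (i : Fin n) (d : E n) : Prop :=
  (∀ j ∉ insert i (spt x), d j = 0) ∧ ∀ j, x j = 0 → 0 ≤ d j

lemma isAdmissibleDir_single {i : Fin n} {c : ℝ} (hc : x i = 0 → 0 ≤ c) :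
    IsAdmissibleDir x i (EuclideanSpace.single i c) := by
  refine ⟨fun j hj => ?_, fun j hxj => ?_⟩
  · simp_all
  · by_cases hji : j = i
    · subst hji; simpa using hc hxj
    · simp [hji]

lemma isAdmissibleDir_single_sub_single {i i₀ : Fin n} {a b : ℝ} (hi₀ : x i₀ ≠ 0)
    (ha : x i = 0 → 0 ≤ a) :
    IsAdmissibleDir x i (EuclideanSpace.single i a - EuclideanSpace.single i₀ b) := by
  refine ⟨fun j hj => ?_, fun j hxj => ?_⟩
  · simp only [Finset.mem_insert, spt, Finset.mem_filter, Finset.mem_univ, true_and, not_or,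
      not_not] at hj
    have hji₀ : j ≠ i₀ := by rintro rfl; exact hi₀ hj.2
    simp [hj.1, hji₀]
  · have hji₀ : j ≠ i₀ := by rintro rfl; exact hi₀ hxj
    by_cases hji : j = i
    · subst hji; simpa [hji₀] using ha hxj
    · simp [hji, hji₀]

lemma inner_sub_nonpos_of_admissible (hv : ∀ i d, IsAdmissibleDir x i d → ⟪v, d⟫ ≤ 0)
    (hy : ∀ i, 0 ≤ y i) : ⟪v, y - x⟫ ≤ 0 := by
  rw [EuclideanSpace.real_inner_eq_sum]
  refine Finset.sum_nonpos fun i _ => ?_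
  have hc : x i = 0 → 0 ≤ y i - x i := fun hxi => by simpa [hxi] using hy i
  simpa [EuclideanSpace.inner_single_right, mul_comm] using hv i _ (isAdmissibleDir_single hc)

lemma inner_sub_nonpos_of_admissible_descent {i₀ : Fin n} (hγ : 0 < γ i₀) (hxi₀ : x i₀ ≠ 0)
    (hv : ∀ i d, IsAdmissibleDir x i d → ⟪γ, d⟫ < 0 → ⟪v, d⟫ ≤ 0) (hy : ∀ i, 0 ≤ y i)
    (hγy : ⟪γ, y - x⟫ ≤ 0) : ⟪v, y - x⟫ ≤ 0 := by
  have hpair : ∀ i a b, (x i = 0 → 0 ≤ a) → γ i * a - γ i₀ * b < 0 → v i * a - v i₀ * b ≤ 0 := by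
    intro i a b ha hab
    simpa [inner_sub_right, EuclideanSpace.inner_single_right, mul_comm] using
      hv i _ (isAdmissibleDir_single_sub_single hxi₀ ha)
        (by simpa [inner_sub_right, EuclideanSpace.inner_single_right, mul_comm] using hab)
  have hvi₀ : 0 ≤ v i₀ := by
    have := hpair i₀ 0 1 (fun _ => le_rfl) (by linarith)
    linarith
  -- compensate a step `a` in coordinate `i` by `γ i * a / γ i₀ + ε` in `i₀`, then let `ε → 0`
  have hcoord : ∀ i a, (x i = 0 → 0 ≤ a) → v i * a ≤ v i₀ / γ i₀ * (γ i * a) := by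
    intro i a ha
    have hlim : Tendsto (fun ε => v i₀ * (γ i * a / γ i₀ + ε)) (𝓝[>] 0)
        (𝓝 (v i₀ / γ i₀ * (γ i * a))) := by
      refine Tendsto.mono_left ?_ nhdsWithin_le_nhds
      refine (continuous_const.mul (continuous_const.add continuous_id)).tendsto' 0 _ ?_
      simp only [Pi.mul_apply, Pi.add_apply, id, add_zero]
      field_simp
    refine ge_of_tendsto hlim (eventually_nhdsWithin_of_forall fun ε (hε : 0 < ε) => ?_)
    have := hpair i a (γ i * a / γ i₀ + ε) ha (by
      rw [mul_add, mul_div_cancel₀ _ hγ.ne']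
      nlinarith)
    linarith
  calc ⟪v, y - x⟫ = ∑ i, v i * (y - x) i := EuclideanSpace.real_inner_eq_sum _ _
    _ ≤ ∑ i, v i₀ / γ i₀ * (γ i * (y - x) i) :=
      Finset.sum_le_sum fun i _ => hcoord i _ fun hxi => by simpa [hxi] using hy i
    _ = v i₀ / γ i₀ * ⟪γ, y - x⟫ := by rw [← Finset.mul_sum, EuclideanSpace.real_inner_eq_sum]
    _ ≤ 0 := mul_nonpos_of_nonneg_of_nonpos (div_nonneg hvi₀ hγ.le) hγy

end Sparse

theorem stmt18_general {n s : ℕ} (g : E n → ℝ) (hg : ConvexOn ℝ Set.univ g)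
    (g' : E n → E n) (hgrad : ∀ x, HasGradientAt g (g' x) x)
    (hmono : ∀ x : E n, (∀ i, 0 ≤ x i) → ∀ i, 0 ≤ g' x i)
    (hg0 : g 0 < 0)
    (hsupp : ∀ x : E n, (∀ i, 0 ≤ x i) → x ≠ 0 → ∃ i, x i ≠ 0 ∧ g' x i ≠ 0)
    (hs2 : s < n)
    (x : E n) (hxQ : g x ≤ 0 ∧ ∀ i, 0 ≤ x i) (hcard : (spt x).card < s)
    (v : E n)
    (hv : ∀ T : Finset (Fin n), spt x ⊆ T → T.card = s →
      ∀ y : E n, (g y ≤ 0 ∧ ∀ i, 0 ≤ y i) → (∀ i ∉ T, y i = 0) →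
        ⟪v, y - x⟫ ≤ 0) :
    ∀ y : E n, (g y ≤ 0 ∧ ∀ i, 0 ≤ y i) → ⟪v, y - x⟫ ≤ 0 := by
  intro y hy
  have hdir : ∀ i d, IsAdmissibleDir x i d → g x < 0 ∨ ⟪g' x, d⟫ < 0 → ⟪v, d⟫ ≤ 0 := by
    intro i d hd hdec
    obtain ⟨T, hiT, hT⟩ := Finset.exists_superset_card_eq
      ((Finset.card_insert_le i (spt x)).trans hcard) (by simpa using hs2.le)
    have hxT : spt x ⊆ T := (Finset.subset_insert _ _).trans hiT
    exact inner_nonpos_of_feasible_dir (hgrad x) hxQ hxT (hv T hxT hT)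
      (fun j hj => hd.1 j (mt (@hiT j) hj)) hd.2 hdec
  rcases hxQ.1.lt_or_eq with hlt | hbd
  · exact inner_sub_nonpos_of_admissible (fun i d hd => hdir i d hd (.inl hlt)) hy.2
  · obtain ⟨i₀, hxi₀, hγi₀⟩ := hsupp x hxQ.2 (by rintro rfl; linarith)
    refine inner_sub_nonpos_of_admissible_descent ((hmono x hxQ.2 i₀).lt_of_ne' hγi₀) hxi₀
      (fun i d hd h => hdir i d hd (.inr h)) hy.2 ?_
    linarith [hg.add_inner_gradient_le (hgrad x) y, hy.1]

theorem stmt18 {n s : ℕ} (g : E n → ℝ) (hg : ConvexOn ℝ Set.univ g)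
    (g' : E n → E n) (hgrad : ∀ x, HasGradientAt g (g' x) x)
    (hmono : ∀ x : E n, (∀ i, 0 ≤ x i) → ∀ i, 0 ≤ g' x i)
    (hg0 : g 0 < 0)
    (hsupp : ∀ x : E n, (∀ i, 0 ≤ x i) → x ≠ 0 → ∃ i, x i ≠ 0 ∧ g' x i ≠ 0)
    (hs1 : 1 ≤ s) (hs2 : s < n)
    (x : E n) (hxQ : g x ≤ 0 ∧ ∀ i, 0 ≤ x i) (hcard : (spt x).card < s)
    (v : E n)
    (hv : ∀ T : Finset (Fin n), spt x ⊆ T → T.card = s →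
      ∀ y : E n, (g y ≤ 0 ∧ ∀ i, 0 ≤ y i) → (∀ i ∉ T, y i = 0) →
        ⟪v, y - x⟫ ≤ 0) :
    ∀ y : E n, (g y ≤ 0 ∧ ∀ i, 0 ≤ y i) → ⟪v, y - x⟫ ≤ 0 :=
  stmt18_general g hg g' hgrad hmono hg0 hsupp hs2 x hxQ hcard v hv
end
end

section
/- Let s ∈ {1,...,n-1}, Ω ⊆ ℝ^n a nonnegative symmetric closed convex set, and a ∈ ℝ^n. Suppose y and z are both projections of a onto C_s ∩ Ω, and suppose ‖y‖₀ < s, supp(z) ⊆ supp(y). Then y = z. -/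
open scoped RealInnerProductSpace

noncomputable section

/-!
Both `y` and `z` are supported in `supp y`, so every convex combination of them is still
`s`-sparse, and by convexity of `Ω` it lies in `Cs n s ∩ Ω`. Since Euclidean balls are strictly
convex, a proper convex combination of two distinct nearest points would be strictly closer to `a`.
-/

theorem spt_smul_add_smul_subset {n : ℕ} (c d : ℝ) (y z : E n) :
    spt (c • y + d • z) ⊆ spt y ∪ spt z := by
  intro i hi
  simp only [spt, Finset.mem_union, Finset.mem_filter, Finset.mem_univ, true_and] at hi ⊢
  by_contra! h
  exact hi (by simp [h.1, h.2])

theorem IsProj.eq_of_combo_mem {n : ℕ} {X : Set (E n)} {a y z : E n}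
    (hy : IsProj X a y) (hz : IsProj X a z) {c d : ℝ} (hc : 0 < c) (hd : 0 < d) (hcd : c + d = 1)
    (hcomb : c • y + d • z ∈ X) : y = z := by
  by_contra hne
  have hy_ball : y ∈ Metric.closedBall a ‖y - a‖ := by
    rw [Metric.mem_closedBall, dist_eq_norm]
  have hz_ball : z ∈ Metric.closedBall a ‖y - a‖ := by
    rw [Metric.mem_closedBall, dist_eq_norm]
    exact hz.2 y hy.1
  have hcloser := combo_mem_ball_of_ne hy_ball hz_ball hne hc hd hcd
  rw [Metric.mem_ball, dist_eq_norm] at hcloser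
  exact (hy.2 _ hcomb).not_gt hcloser

theorem stmt19_general {n s : ℕ} (Ω : Set (E n))
    (hconv : Convex ℝ Ω)
    (a y z : E n)
    (hy : IsProj (Cs n s ∩ Ω) a y) (hz : IsProj (Cs n s ∩ Ω) a z)
    (hsub : spt z ⊆ spt y) :
    y = z := by
  have hspt : spt ((1 / 2 : ℝ) • y + (1 / 2 : ℝ) • z) ⊆ spt y :=
    (spt_smul_add_smul_subset _ _ y z).trans (Finset.union_subset le_rfl hsub)
  have hsparse : (1 / 2 : ℝ) • y + (1 / 2 : ℝ) • z ∈ Cs n s :=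
    (Finset.card_le_card hspt).trans hy.1.1
  have hmem : (1 / 2 : ℝ) • y + (1 / 2 : ℝ) • z ∈ Ω :=
    hconv hy.1.2 hz.1.2 (by norm_num) (by norm_num) (by norm_num)
  exact hy.eq_of_combo_mem hz (by norm_num) (by norm_num) (by norm_num) ⟨hsparse, hmem⟩

theorem stmt19 {n s : ℕ} (Ω : Set (E n)) (hcl : IsClosed Ω) (hnn : IsNonnegSymmSet Ω)
    (hconv : Convex ℝ Ω) (hs1 : 1 ≤ s) (hs2 : s < n)
    (a y z : E n)
    (hy : IsProj (Cs n s ∩ Ω) a y) (hz : IsProj (Cs n s ∩ Ω) a z)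
    (hcard : (spt y).card < s) (hsub : spt z ⊆ spt y) :
    y = z :=
  stmt19_general Ω hconv a y z hy hz hsub
end
end
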